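/- arXiv:1907.12234 — 8 statements merged into one kernel-verified Lean document; each statement's English description precedes it below -/
import Mathlib

section
/- Let n ≥ 1, let g₁, g₂ ∈ ℂⁿ with g₁ ≠ 0, let P > 0, and let φ be a real number with 0 ≤ φ ≤ P·‖g₁‖². Consider the feasible set F = {Q : Q an n×n complex positive semidefinite matrix, g₁ᴴQg₁ = φ, Re(Tr Q) ≤ P}. Then F is nonempty, and there exists Q* ∈ F that minimizes the objective Q ↦ g₂ᴴQg₂ over F and satisfies rank(Q*) ≤ 1. (This is Lemma 2 of the paper: beamforming, i.e., a rank-one jamming covariance, is optimal for attaining the upper boundary of the suspicious-links rate region.) -/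
open Matrix
open scoped ComplexOrder

/-!
Every feasible `Q` is dominated by a feasible rank-one matrix. With `a = g₁`, `b = g₂`, `φ = aᴴQa`
and `v = φ^{-1/2} Q a` we get `|aᴴv|² = φ`, Cauchy–Schwarz for the form of `Q` gives
`|bᴴv|² = |bᴴQa|² / φ ≤ bᴴQb`, and `‖Qa‖² = (Qa)ᴴQa ≤ φ^{1/2} ((Qa)ᴴQ(Qa))^{1/2}` together with
`xᴴQx ≤ ‖x‖² tr Q` gives `‖v‖² ≤ tr Q`. The set of `v` with `vvᴴ` feasible is compact, so
`v ↦ |bᴴv|²` attains its minimum there, and by domination that minimum is the minimum over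
all feasible `Q`.
-/

namespace Matrix
variable {𝕜 n : Type*} [RCLike 𝕜] [Fintype n]

theorem dotProduct_vecMulVec_star_mulVec (x u y : n → 𝕜) :
    star x ⬝ᵥ vecMulVec u (star u) *ᵥ y = (star x ⬝ᵥ u) * (star u ⬝ᵥ y) := by
  rw [vecMulVec_mulVec, op_smul_eq_smul, dotProduct_smul, smul_eq_mul, mul_comm]

theorem re_dotProduct_vecMulVec_star_mulVec_self (x u : n → 𝕜) :
    RCLike.re (star x ⬝ᵥ vecMulVec u (star u) *ᵥ x) = ‖star x ⬝ᵥ u‖ ^ 2 := by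
  rw [dotProduct_vecMulVec_star_mulVec, ← star_star x, star_dotProduct, star_star,
    RCLike.star_def, RCLike.conj_mul, RCLike.norm_conj]
  norm_cast

theorem re_trace_vecMulVec_star (u : n → 𝕜) :
    RCLike.re (vecMulVec u (star u)).trace = RCLike.re (star u ⬝ᵥ u) := by
  rw [trace_vecMulVec, dotProduct_comm]

namespace PosSemidef
variable {Q : Matrix n n 𝕜}

theorem norm_dotProduct_mulVec_sq_le (hQ : Q.PosSemidef) (x y : n → 𝕜) :
    ‖star x ⬝ᵥ Q *ᵥ y‖ ^ 2 ≤
      RCLike.re (star x ⬝ᵥ Q *ᵥ x) * RCLike.re (star y ⬝ᵥ Q *ᵥ y) := by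
  let := Q.toSeminormedAddCommGroup hQ
  let := Q.toInnerProductSpace hQ
  have hinner (u v : n → 𝕜) : inner 𝕜 u v = star u ⬝ᵥ Q *ᵥ v := dotProduct_comm _ _
  have h := inner_mul_inner_self_le (𝕜 := 𝕜) x y
  rwa [norm_inner_symm y x, ← sq, hinner, hinner, hinner] at h

theorem re_dotProduct_mulVec_le_mul_re_trace (hQ : Q.PosSemidef) (y : n → 𝕜) :
    RCLike.re (star y ⬝ᵥ Q *ᵥ y) ≤ RCLike.re (star y ⬝ᵥ y) * RCLike.re Q.trace := by
  classical
  obtain ⟨m, u, rfl⟩ := posSemidef_iff_eq_sum_vecMulVec.mp hQ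
  simp only [sum_mulVec, dotProduct_sum, trace_sum, map_sum, Finset.mul_sum,
    re_dotProduct_vecMulVec_star_mulVec_self, re_trace_vecMulVec_star]
  gcongr with i
  simpa only [one_mulVec] using PosSemidef.one.norm_dotProduct_mulVec_sq_le y (u i)

theorem re_dotProduct_star_mulVec_self_le (hQ : Q.PosSemidef) (x : n → 𝕜) :
    RCLike.re (star (Q *ᵥ x) ⬝ᵥ Q *ᵥ x) ≤ RCLike.re (star x ⬝ᵥ Q *ᵥ x) * RCLike.re Q.trace := by
  set t := RCLike.re (star (Q *ᵥ x) ⬝ᵥ Q *ᵥ x)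
  have ht : 0 ≤ t := (RCLike.nonneg_iff.mp (dotProduct_star_self_nonneg _)).1
  have hc : 0 ≤ RCLike.re (star x ⬝ᵥ Q *ᵥ x) * RCLike.re Q.trace :=
    mul_nonneg (hQ.re_dotProduct_nonneg x) (RCLike.nonneg_iff.mp hQ.trace_nonneg).1
  have key : t ^ 2 ≤ t * (RCLike.re (star x ⬝ᵥ Q *ᵥ x) * RCLike.re Q.trace) := calc
    t ^ 2 ≤ ‖star (Q *ᵥ x) ⬝ᵥ Q *ᵥ x‖ ^ 2 := by gcongr; exact RCLike.re_le_norm _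
    _ ≤ RCLike.re (star (Q *ᵥ x) ⬝ᵥ Q *ᵥ (Q *ᵥ x)) * RCLike.re (star x ⬝ᵥ Q *ᵥ x) :=
      hQ.norm_dotProduct_mulVec_sq_le _ _
    _ ≤ t * RCLike.re Q.trace * RCLike.re (star x ⬝ᵥ Q *ᵥ x) := by
      gcongr
      exacts [hQ.re_dotProduct_nonneg x, hQ.re_dotProduct_mulVec_le_mul_re_trace _]
    _ = t * (RCLike.re (star x ⬝ᵥ Q *ᵥ x) * RCLike.re Q.trace) := by ring
  nlinarith

theorem exists_vecMulVec_star_le (hQ : Q.PosSemidef) (a b : n → 𝕜) :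
    ∃ v : n → 𝕜,
      RCLike.re (star a ⬝ᵥ vecMulVec v (star v) *ᵥ a) = RCLike.re (star a ⬝ᵥ Q *ᵥ a) ∧
      RCLike.re (vecMulVec v (star v)).trace ≤ RCLike.re Q.trace ∧
      RCLike.re (star b ⬝ᵥ vecMulVec v (star v) *ᵥ b) ≤ RCLike.re (star b ⬝ᵥ Q *ᵥ b) := by
  set φ := RCLike.re (star a ⬝ᵥ Q *ᵥ a)
  have hφ : 0 ≤ φ := hQ.re_dotProduct_nonneg a
  have hc : ((√φ)⁻¹) ^ 2 = φ⁻¹ := by rw [inv_pow, Real.sq_sqrt hφ]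
  have hcancel {t : ℝ} (ht : 0 ≤ t) : φ⁻¹ * (φ * t) ≤ t := by
    rw [← mul_assoc]; exact mul_le_of_le_one_left ht inv_mul_le_one
  -- for `φ = 0` the junk value `(√0)⁻¹ = 0` gives `v = 0`, which still satisfies all three
  refine ⟨(√φ)⁻¹ • Q *ᵥ a, ?_, ?_, ?_⟩
  · rw [re_dotProduct_vecMulVec_star_mulVec_self, dotProduct_smul, norm_smul, mul_pow,
      Real.norm_eq_abs, sq_abs, hc]
    have hnorm : ‖star a ⬝ᵥ Q *ᵥ a‖ = φ := by
      simpa using congrArg RCLike.re (RCLike.norm_of_nonneg' (hQ.dotProduct_mulVec_nonneg a))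
    rw [hnorm, sq, ← mul_assoc, inv_mul_mul_self]
  · rw [re_trace_vecMulVec_star, star_smul, dotProduct_smul, smul_dotProduct, smul_smul,
      RCLike.smul_re, star_trivial, ← sq, hc]
    calc φ⁻¹ * RCLike.re (star (Q *ᵥ a) ⬝ᵥ Q *ᵥ a) ≤ φ⁻¹ * (φ * RCLike.re Q.trace) := by
          gcongr; exact hQ.re_dotProduct_star_mulVec_self_le a
      _ ≤ RCLike.re Q.trace := hcancel (RCLike.nonneg_iff.mp hQ.trace_nonneg).1
  · rw [re_dotProduct_vecMulVec_star_mulVec_self, dotProduct_smul, norm_smul, mul_pow,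
      Real.norm_eq_abs, sq_abs, hc]
    calc φ⁻¹ * ‖star b ⬝ᵥ Q *ᵥ a‖ ^ 2 ≤ φ⁻¹ * (φ * RCLike.re (star b ⬝ᵥ Q *ᵥ b)) := by
          gcongr; rw [mul_comm]; exact hQ.norm_dotProduct_mulVec_sq_le b a
      _ ≤ RCLike.re (star b ⬝ᵥ Q *ᵥ b) := hcancel (hQ.re_dotProduct_nonneg b)

end PosSemidef

theorem isCompact_setOf_re_dotProduct_star_self_le (P : ℝ) :
    IsCompact {v : n → 𝕜 | RCLike.re (star v ⬝ᵥ v) ≤ P} := by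
  refine Metric.isCompact_of_isClosed_isBounded (isClosed_le (by fun_prop) continuous_const)
    ((Metric.isBounded_closedBall (x := 0) (r := √P)).subset ?_)
  intro v (hv : RCLike.re (star v ⬝ᵥ v) ≤ P)
  rw [mem_closedBall_zero_iff, pi_norm_le_iff_of_nonneg (Real.sqrt_nonneg P)]
  intro i
  refine Real.le_sqrt_of_sq_le (le_trans ?_ hv)
  have hsum : RCLike.re (star v ⬝ᵥ v) = ∑ j, ‖v j‖ ^ 2 := by
    simp [dotProduct, RCLike.conj_mul]
  rw [hsum]
  exact Finset.single_le_sum (f := fun j => ‖v j‖ ^ 2) (fun j _ => sq_nonneg _)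
    (Finset.mem_univ i)

end Matrix

section FeasibleCovariances
variable {𝕜 n : Type*} [RCLike 𝕜] [Fintype n]

def feasibleCovariances (a : n → 𝕜) (φ P : ℝ) : Set (Matrix n n 𝕜) :=
  {Q | Q.PosSemidef ∧ RCLike.re (star a ⬝ᵥ Q *ᵥ a) = φ ∧ RCLike.re Q.trace ≤ P}

theorem feasibleCovariances_nonempty {a : n → 𝕜} (ha : a ≠ 0) {φ P : ℝ} (hφ0 : 0 ≤ φ)
    (hφP : φ ≤ P * RCLike.re (star a ⬝ᵥ a)) : (feasibleCovariances a φ P).Nonempty := by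
  set N := RCLike.re (star a ⬝ᵥ a)
  have hN : 0 < N := (RCLike.pos_iff.mp (dotProduct_star_self_pos_iff.mpr ha)).1
  have hnorm : ‖star a ⬝ᵥ a‖ = N := by
    simpa using congrArg RCLike.re (RCLike.norm_of_nonneg' (dotProduct_star_self_nonneg a))
  set v := (√φ / N) • a
  refine ⟨vecMulVec v (star v), posSemidef_vecMulVec_self_star v, ?_, ?_⟩
  · rw [re_dotProduct_vecMulVec_star_mulVec_self, dotProduct_smul, norm_smul, hnorm,
      Real.norm_eq_abs, abs_of_nonneg (by positivity), div_mul_cancel₀ _ hN.ne',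
      Real.sq_sqrt hφ0]
  · rw [re_trace_vecMulVec_star, star_smul, dotProduct_smul, smul_dotProduct, smul_smul,
      RCLike.smul_re, star_trivial, ← sq, div_pow, Real.sq_sqrt hφ0, sq, div_mul_eq_mul_div,
      mul_div_mul_right _ _ hN.ne', div_le_iff₀ hN]
    exact hφP

theorem exists_vecMulVec_star_isMinOn (a b : n → 𝕜) (φ P : ℝ)
    (hF : (feasibleCovariances a φ P).Nonempty) :
    ∃ v : n → 𝕜, vecMulVec v (star v) ∈ feasibleCovariances a φ P ∧
      IsMinOn (fun Q => RCLike.re (star b ⬝ᵥ Q *ᵥ b)) (feasibleCovariances a φ P)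
        (vecMulVec v (star v)) := by
  set K := {v : n → 𝕜 | vecMulVec v (star v) ∈ feasibleCovariances a φ P}
  have hK_eq : K = {v | ‖star a ⬝ᵥ v‖ ^ 2 = φ} ∩ {v | RCLike.re (star v ⬝ᵥ v) ≤ P} := by
    ext v
    simp only [K, feasibleCovariances, Set.mem_ofPred_eq, Set.mem_inter_iff,
      posSemidef_vecMulVec_self_star, true_and, re_dotProduct_vecMulVec_star_mulVec_self,
      re_trace_vecMulVec_star]
  have hK : IsCompact K := by
    rw [hK_eq]
    exact (isCompact_setOf_re_dotProduct_star_self_le P).inter_left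
      (isClosed_eq (by fun_prop) continuous_const)
  have hdom {Q} (hQ : Q ∈ feasibleCovariances a φ P) : ∃ w ∈ K,
      RCLike.re (star b ⬝ᵥ vecMulVec w (star w) *ᵥ b) ≤ RCLike.re (star b ⬝ᵥ Q *ᵥ b) := by
    obtain ⟨w, ha, htr, hb⟩ := hQ.1.exists_vecMulVec_star_le a b
    exact ⟨w, ⟨posSemidef_vecMulVec_self_star w, ha.trans hQ.2.1, htr.trans hQ.2.2⟩, hb⟩
  obtain ⟨Q₀, hQ₀⟩ := hF
  obtain ⟨w₀, hw₀, -⟩ := hdom hQ₀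
  obtain ⟨v, hv, hmin⟩ := hK.exists_isMinOn ⟨w₀, hw₀⟩
    (f := fun v => RCLike.re (star b ⬝ᵥ vecMulVec v (star v) *ᵥ b))
    (by simp only [re_dotProduct_vecMulVec_star_mulVec_self]; fun_prop)
  refine ⟨v, hv, fun Q hQ => ?_⟩
  obtain ⟨w, hw, hwQ⟩ := hdom hQ
  exact (hmin hw).trans hwQ

end FeasibleCovariances

theorem stmt1_general (n : ℕ) (g₁ g₂ : Fin n → ℂ) (hg₁ : g₁ ≠ 0)
    (P φ : ℝ) (hφ0 : 0 ≤ φ) (hφ : φ ≤ P * (star g₁ ⬝ᵥ g₁).re) :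
    (∃ Q : Matrix (Fin n) (Fin n) ℂ,
        Q.PosSemidef ∧ (star g₁ ⬝ᵥ Q.mulVec g₁).re = φ ∧ Q.trace.re ≤ P) ∧
    ∃ Qs : Matrix (Fin n) (Fin n) ℂ,
      (Qs.PosSemidef ∧ (star g₁ ⬝ᵥ Qs.mulVec g₁).re = φ ∧ Qs.trace.re ≤ P) ∧
      (∀ Q : Matrix (Fin n) (Fin n) ℂ,
        Q.PosSemidef → (star g₁ ⬝ᵥ Q.mulVec g₁).re = φ → Q.trace.re ≤ P →
          (star g₂ ⬝ᵥ Qs.mulVec g₂).re ≤ (star g₂ ⬝ᵥ Q.mulVec g₂).re) ∧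
      Qs.rank ≤ 1 := by
  have hF := feasibleCovariances_nonempty hg₁ hφ0 hφ
  obtain ⟨v, hv, hmin⟩ := exists_vecMulVec_star_isMinOn g₁ g₂ φ P hF
  exact ⟨hF, _, hv, fun Q h₁ h₂ h₃ => hmin ⟨h₁, h₂, h₃⟩, rank_vecMulVec_le _ _⟩

/-- Lemma 2 of the paper: the feasible set of the upper-boundary problem is nonempty and
admits a rank-at-most-one minimizer of the jamming power leaked to receiver 2. -/
theorem stmt1 (n : ℕ) (hn : 1 ≤ n) (g₁ g₂ : Fin n → ℂ) (hg₁ : g₁ ≠ 0)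
    (P φ : ℝ) (hP : 0 < P) (hφ0 : 0 ≤ φ) (hφ : φ ≤ P * (star g₁ ⬝ᵥ g₁).re) :
    (∃ Q : Matrix (Fin n) (Fin n) ℂ,
        Q.PosSemidef ∧ (star g₁ ⬝ᵥ Q.mulVec g₁).re = φ ∧ Q.trace.re ≤ P) ∧
    ∃ Qs : Matrix (Fin n) (Fin n) ℂ,
      (Qs.PosSemidef ∧ (star g₁ ⬝ᵥ Qs.mulVec g₁).re = φ ∧ Qs.trace.re ≤ P) ∧
      (∀ Q : Matrix (Fin n) (Fin n) ℂ,
        Q.PosSemidef → (star g₁ ⬝ᵥ Q.mulVec g₁).re = φ → Q.trace.re ≤ P →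
          (star g₂ ⬝ᵥ Qs.mulVec g₂).re ≤ (star g₂ ⬝ᵥ Q.mulVec g₂).re) ∧
      Qs.rank ≤ 1 :=
  stmt1_general n g₁ g₂ hg₁ P φ hφ0 hφ
end

section
/- Let n ≥ 1, let g₁, g₂ ∈ ℂⁿ with g₁ ≠ 0, let P > 0, and let φ be a real number with 0 ≤ φ ≤ P·‖g₁‖². Consider the feasible set F = {Q : Q an n×n complex positive semidefinite matrix, g₁ᴴQg₁ = φ, Re(Tr Q) ≤ P}. Then F is nonempty, and there exists Q* ∈ F that maximizes the objective Q ↦ g₂ᴴQg₂ over F and satisfies rank(Q*) ≤ 1. (This is the paper's rank-one optimality claim for the lower-boundary problem (15): beamforming is optimal for attaining the lower boundary of the suspicious-links rate region.) -/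
/-!
Normalize `g₁ = ‖g₁‖ • e` and split `g₂ = α • e + h` with `h ⟂ e`. For a positive operator `T`
with `⟪g₁, T g₁⟫ = φ` and `tr T ≤ P`, the seminorm `x ↦ √⟪x, T x⟫` gives
`√⟪g₂, T g₂⟫ ≤ ‖α‖ √a + ‖h‖ √⟪u, T u⟫`, where `a = φ / ‖g₁‖²` and `u = h / ‖h‖`; since `e` and `u`
are orthonormal, `a + ⟪u, T u⟫ ≤ tr T ≤ P`. The rank-one operator `w wᴴ` with
`w = √a θ e + √(P - a) u`, where `θ` is the phase of `α`, is feasible and attains this bound.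
-/

open Matrix ComplexConjugate
open scoped ComplexOrder InnerProductSpace

theorem LinearMap.IsPositive.sum_re_inner_le_re_trace {𝕜 E ι : Type*} [RCLike 𝕜]
    [NormedAddCommGroup E] [InnerProductSpace 𝕜 E] [FiniteDimensional 𝕜 E] [Fintype ι]
    {T : E →ₗ[𝕜] E} (hT : T.IsPositive) {v : ι → E} (hv : Orthonormal 𝕜 v) :
    ∑ i, RCLike.re ⟪v i, T (v i)⟫_𝕜 ≤ RCLike.re (LinearMap.trace 𝕜 E T) := by
  classical
  obtain ⟨s, b, hvs, hb⟩ := hv.toSubtypeRange.exists_orthonormalBasis_extension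
  have hrange : Finset.univ.image v ⊆ s := by
    intro x hx
    obtain ⟨i, -, rfl⟩ := Finset.mem_image.mp hx
    exact hvs ⟨i, rfl⟩
  rw [LinearMap.trace_eq_sum_inner T b, map_sum, hb,
    ← Finset.sum_image (f := fun x => RCLike.re ⟪x, T x⟫_𝕜) hv.linearIndependent.injective.injOn,
    Finset.sum_coe_sort s (fun x => RCLike.re ⟪x, T x⟫_𝕜)]
  exact Finset.sum_le_sum_of_subset_of_nonneg hrange fun x _ _ => hT.re_inner_nonneg_right x

theorem LinearMap.re_inner_smul_map_smul {E : Type*} [NormedAddCommGroup E]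
    [InnerProductSpace ℂ E] (T : E →ₗ[ℂ] E) (c : ℂ) (x : E) :
    (⟪c • x, T (c • x)⟫_ℂ).re = ‖c‖ ^ 2 * (⟪x, T x⟫_ℂ).re := by
  rw [map_smul, inner_smul_left, inner_smul_right, ← mul_assoc, Complex.conj_mul',
    ← Complex.ofReal_pow, Complex.re_ofReal_mul]

section Positive

variable {E : Type*} [NormedAddCommGroup E] [InnerProductSpace ℂ E] [FiniteDimensional ℂ E]
  {T : E →ₗ[ℂ] E}

theorem LinearMap.IsPositive.exists_re_inner_eq_norm_sq (hT : T.IsPositive) :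
    ∃ S : E →ₗ[ℂ] E, ∀ x, (⟪x, T x⟫_ℂ).re = ‖S x‖ ^ 2 := by
  have := FiniteDimensional.complete ℂ E
  have h0 : 0 ≤ LinearMap.toContinuousLinearMap T := by
    rw [ContinuousLinearMap.nonneg_iff_isPositive]
    exact (LinearMap.isPositive_toContinuousLinearMap_iff T).2 hT
  obtain ⟨S, hS⟩ := CStarAlgebra.nonneg_iff_eq_star_mul_self.mp h0
  refine ⟨S, fun x => ?_⟩
  have hTx : T x = ContinuousLinearMap.adjoint S (S x) := by
    rw [← ContinuousLinearMap.star_eq_adjoint]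
    exact congrArg (fun A => A x) hS
  rw [hTx, ContinuousLinearMap.adjoint_inner_right, inner_self_eq_norm_sq_to_K]
  norm_cast

theorem LinearMap.IsPositive.re_inner_le_of_inner_eq_zero (hT : T.IsPositive) {e h : E}
    (he : ‖e‖ = 1) (heh : ⟪e, h⟫_ℂ = 0) :
    (⟪h, T h⟫_ℂ).re ≤ ‖h‖ ^ 2 * ((LinearMap.trace ℂ E T).re - (⟪e, T e⟫_ℂ).re) := by
  rcases eq_or_ne h 0 with rfl | hh
  · simp
  set u : E := (‖h‖⁻¹ : ℂ) • h
  have hhu : h = (‖h‖ : ℂ) • u := by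
    rw [smul_smul, mul_inv_cancel₀ (by exact_mod_cast norm_ne_zero_iff.2 hh), one_smul]
  have hu : Orthonormal ℂ ![e, u] := by
    simp [u, he, heh, inner_smul_right, norm_smul, hh]
  have hsum := hT.sum_re_inner_le_re_trace hu
  simp only [Fin.sum_univ_two, Matrix.cons_val_zero, Matrix.cons_val_one, RCLike.re_to_complex]
    at hsum
  conv_lhs => rw [hhu, T.re_inner_smul_map_smul, Complex.norm_real, norm_norm]
  exact mul_le_mul_of_nonneg_left (le_sub_iff_add_le'.2 hsum) (sq_nonneg _)

theorem LinearMap.IsPositive.sqrt_re_inner_smul_add_le (hT : T.IsPositive) {e h : E}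
    (he : ‖e‖ = 1) (heh : ⟪e, h⟫_ℂ = 0) (α : ℂ) :
    √(⟪α • e + h, T (α • e + h)⟫_ℂ).re ≤
      ‖α‖ * √(⟪e, T e⟫_ℂ).re + ‖h‖ * √((LinearMap.trace ℂ E T).re - (⟪e, T e⟫_ℂ).re) := by
  obtain ⟨S, hS⟩ := hT.exists_re_inner_eq_norm_sq
  have hSh : ‖S h‖ ≤ ‖h‖ * √((LinearMap.trace ℂ E T).re - (⟪e, T e⟫_ℂ).re) := by
    rw [← Real.sqrt_sq (norm_nonneg h), ← Real.sqrt_mul (sq_nonneg _),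
      ← Real.sqrt_sq (norm_nonneg (S h)), ← hS]
    exact Real.sqrt_le_sqrt (hT.re_inner_le_of_inner_eq_zero he heh)
  rw [hS e] at hSh ⊢
  rw [hS, Real.sqrt_sq (norm_nonneg _), Real.sqrt_sq (norm_nonneg _), map_add, map_smul]
  calc ‖α • S e + S h‖ ≤ ‖α‖ * ‖S e‖ + ‖S h‖ := by
        simpa [norm_smul] using norm_add_le (α • S e) (S h)
    _ ≤ _ := by gcongr

end Positive

theorem Complex.exists_norm_eq_one_conj_mul_eq_norm (α : ℂ) :
    ∃ θ : ℂ, ‖θ‖ = 1 ∧ conj θ * α = ‖α‖ := by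
  set θ := Complex.exp (α.arg * Complex.I)
  have hθ : ‖θ‖ = 1 := Complex.norm_exp_ofReal_mul_I _
  refine ⟨θ, hθ, ?_⟩
  calc conj θ * α = conj θ * (‖α‖ * θ) := by rw [Complex.norm_mul_exp_arg_mul_I]
    _ = ‖α‖ * ‖θ‖ ^ 2 := by rw [mul_left_comm, Complex.conj_mul']
    _ = ‖α‖ := by simp [hθ]

section Beamforming

variable {E : Type*} [NormedAddCommGroup E] [InnerProductSpace ℂ E]

theorem exists_norm_inner_sq_eq_and_inner_add_eq {e h : E} (he : ‖e‖ = 1)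
    (heh : ⟪e, h⟫_ℂ = 0) (α : ℂ) {a b : ℝ} (ha : 0 ≤ a) (hb : 0 ≤ b) :
    ∃ w : E, ‖⟪w, e⟫_ℂ‖ ^ 2 = a ∧ ‖w‖ ^ 2 ≤ a + b ∧
      ⟪w, α • e + h⟫_ℂ = ((‖α‖ * √a + ‖h‖ * √b : ℝ) : ℂ) := by
  obtain ⟨θ, hθ, hθα⟩ := Complex.exists_norm_eq_one_conj_mul_eq_norm α
  have hhe : ⟪h, e⟫_ℂ = 0 := inner_eq_zero_symm.mp heh
  -- `√b / ‖h‖ = 0` when `h = 0`; it then multiplies `h = 0`, so both facts still hold.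
  have hdiv : √b / ‖h‖ * ‖h‖ ^ 2 = ‖h‖ * √b ∧ (√b / ‖h‖) ^ 2 * ‖h‖ ^ 2 ≤ b := by
    rcases eq_or_ne ‖h‖ 0 with h0 | h0
    · simp [h0, hb]
    · field_simp
      simp [hb]
  refine ⟨((√a : ℂ) * θ) • e + ((√b / ‖h‖ : ℝ) : ℂ) • h, ?_, ?_, ?_⟩
  · simp [hhe, inner_self_eq_norm_sq_to_K, he, hθ, ha]
  · rw [norm_add_sq (𝕜 := ℂ)]
    simp only [inner_smul_left, inner_smul_right, heh, mul_zero, map_zero, add_zero, norm_smul,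
      norm_mul, Complex.norm_real, Real.norm_eq_abs, he, hθ, mul_one, mul_pow, sq_abs,
      Real.sq_sqrt ha]
    linarith [hdiv.2]
  · simp only [inner_add_left, inner_add_right, inner_smul_left, inner_smul_right, heh, hhe,
      inner_self_eq_norm_sq_to_K, he, map_mul, Complex.conj_ofReal]
    have hdivC := congrArg Complex.ofReal hdiv.1
    push_cast at hdivC ⊢
    linear_combination (√a : ℂ) * hθα + hdivC

theorem exists_optimal_beamformer [FiniteDimensional ℂ E] {g₁ : E} (hg₁ : g₁ ≠ 0) (g₂ : E)
    {P φ : ℝ} (hφ0 : 0 ≤ φ) (hφ : φ ≤ P * ‖g₁‖ ^ 2) :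
    ∃ w : E, ‖⟪w, g₁⟫_ℂ‖ ^ 2 = φ ∧ ‖w‖ ^ 2 ≤ P ∧
      ∀ T : E →ₗ[ℂ] E, T.IsPositive → (⟪g₁, T g₁⟫_ℂ).re = φ →
        (LinearMap.trace ℂ E T).re ≤ P → (⟪g₂, T g₂⟫_ℂ).re ≤ ‖⟪w, g₂⟫_ℂ‖ ^ 2 := by
  have hs : 0 < ‖g₁‖ := norm_pos_iff.2 hg₁
  set e : E := (‖g₁‖⁻¹ : ℂ) • g₁
  have he : ‖e‖ = 1 := norm_smul_inv_norm hg₁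
  have hg₁e : g₁ = (‖g₁‖ : ℂ) • e := by
    rw [smul_smul, mul_inv_cancel₀ (by exact_mod_cast hs.ne'), one_smul]
  set α := ⟪e, g₂⟫_ℂ
  set h := g₂ - α • e
  have heh : ⟪e, h⟫_ℂ = 0 := by
    simp [h, inner_self_eq_norm_sq_to_K, he, α]
  have hg₂ : g₂ = α • e + h := (add_sub_cancel _ _).symm
  set a := φ / ‖g₁‖ ^ 2
  have haφ : ‖g₁‖ ^ 2 * a = φ := mul_div_cancel₀ _ (by positivity)
  have ha : 0 ≤ a := by positivity
  have hb : 0 ≤ P - a := sub_nonneg.2 ((div_le_iff₀ (by positivity)).2 hφ)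
  obtain ⟨w, hwe, hwn, hwg⟩ := exists_norm_inner_sq_eq_and_inner_add_eq he heh α ha hb
  rw [← hg₂] at hwg
  refine ⟨w, ?_, by linarith, fun T hT hT₁ hTP => ?_⟩
  · rw [hg₁e, inner_smul_right, norm_mul, mul_pow, hwe, Complex.norm_real, norm_norm, haφ]
  have hTe : (⟪e, T e⟫_ℂ).re = a := by
    rw [hg₁e, T.re_inner_smul_map_smul, Complex.norm_real, norm_norm, ← haφ] at hT₁
    exact mul_left_cancel₀ (by positivity) hT₁
  have hbound := hT.sqrt_re_inner_smul_add_le he heh α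
  rw [hTe, ← hg₂] at hbound
  rw [hwg, Complex.norm_real, Real.norm_of_nonneg (by positivity)]
  refine (Real.sqrt_le_iff.1 (hbound.trans ?_)).2
  gcongr

end Beamforming

theorem InnerProductSpace.re_inner_rankOne_self {E : Type*} [NormedAddCommGroup E]
    [InnerProductSpace ℂ E] (w x : E) : (⟪x, rankOne ℂ w w x⟫_ℂ).re = ‖⟪w, x⟫_ℂ‖ ^ 2 := by
  rw [rankOne_apply, inner_smul_right, ← inner_conj_symm x w, Complex.mul_conj']
  norm_cast

theorem InnerProductSpace.re_trace_rankOne_self {E : Type*} [NormedAddCommGroup E]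
    [InnerProductSpace ℂ E] [FiniteDimensional ℂ E] (w : E) :
    (LinearMap.trace ℂ E (rankOne ℂ w w : E →L[ℂ] E)).re = ‖w‖ ^ 2 := by
  rw [trace_rankOne, inner_self_eq_norm_sq_to_K]
  norm_cast

theorem Matrix.re_star_dotProduct_self {𝕜 m : Type*} [RCLike 𝕜] [Fintype m] (x : m → 𝕜) :
    RCLike.re (star x ⬝ᵥ x) = ‖WithLp.toLp 2 x‖ ^ 2 := by
  rw [dotProduct_comm, ← EuclideanSpace.inner_toLp_toLp, inner_self_eq_norm_sq]

section Matrix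

variable {𝕜 m : Type*} [RCLike 𝕜] [Fintype m] [DecidableEq m]

theorem Matrix.star_dotProduct_mulVec_eq_inner (Q : Matrix m m 𝕜) (x y : m → 𝕜) :
    star x ⬝ᵥ Q *ᵥ y = ⟪WithLp.toLp 2 x, toEuclideanLin Q (WithLp.toLp 2 y)⟫_𝕜 := by
  rw [toLpLin_toLp, EuclideanSpace.inner_toLp_toLp, dotProduct_comm]
  rfl

theorem Matrix.trace_toEuclideanLin (Q : Matrix m m 𝕜) :
    LinearMap.trace 𝕜 _ (toEuclideanLin Q) = Q.trace :=
  Q.trace_toLin_eq (EuclideanSpace.basisFun m 𝕜).toBasis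

theorem Matrix.toEuclideanLin_vecMulVec_self_star (w : EuclideanSpace 𝕜 m) :
    toEuclideanLin (vecMulVec w.ofLp (star w.ofLp)) = InnerProductSpace.rankOne 𝕜 w w := by
  rw [← InnerProductSpace.symm_toEuclideanLin_rankOne, LinearEquiv.apply_symm_apply]

end Matrix

theorem stmt2_general (n : ℕ) (g₁ g₂ : Fin n → ℂ) (hg₁ : g₁ ≠ 0)
    (P φ : ℝ) (hφ0 : 0 ≤ φ) (hφ : φ ≤ P * (star g₁ ⬝ᵥ g₁).re) :
    (∃ Q : Matrix (Fin n) (Fin n) ℂ,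
        Q.PosSemidef ∧ (star g₁ ⬝ᵥ Q.mulVec g₁).re = φ ∧ Q.trace.re ≤ P) ∧
    ∃ Qs : Matrix (Fin n) (Fin n) ℂ,
      (Qs.PosSemidef ∧ (star g₁ ⬝ᵥ Qs.mulVec g₁).re = φ ∧ Qs.trace.re ≤ P) ∧
      (∀ Q : Matrix (Fin n) (Fin n) ℂ,
        Q.PosSemidef → (star g₁ ⬝ᵥ Q.mulVec g₁).re = φ → Q.trace.re ≤ P →
          (star g₂ ⬝ᵥ Q.mulVec g₂).re ≤ (star g₂ ⬝ᵥ Qs.mulVec g₂).re) ∧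
      Qs.rank ≤ 1 := by
  obtain ⟨w, hw₁, hwP, hmax⟩ := exists_optimal_beamformer (g₁ := WithLp.toLp 2 g₁)
    (by simpa using hg₁) (WithLp.toLp 2 g₂) hφ0 (by rwa [← re_star_dotProduct_self])
  have hQs := toEuclideanLin_vecMulVec_self_star w
  set Qs := vecMulVec w.ofLp (star w.ofLp)
  have hQs_re : ∀ x, (star x ⬝ᵥ Qs *ᵥ x).re = ‖⟪w, WithLp.toLp 2 x⟫_ℂ‖ ^ 2 := fun x => by
    rw [star_dotProduct_mulVec_eq_inner, hQs, ContinuousLinearMap.coe_coe,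
      InnerProductSpace.re_inner_rankOne_self]
  have hfeas : Qs.PosSemidef ∧ (star g₁ ⬝ᵥ Qs *ᵥ g₁).re = φ ∧ Qs.trace.re ≤ P := by
    refine ⟨posSemidef_vecMulVec_self_star _, by rw [hQs_re, hw₁], ?_⟩
    rwa [← trace_toEuclideanLin, hQs, InnerProductSpace.re_trace_rankOne_self]
  refine ⟨⟨Qs, hfeas⟩, Qs, hfeas, fun Q hQ hQ₁ hQP => ?_, rank_vecMulVec_le _ _⟩
  rw [star_dotProduct_mulVec_eq_inner] at hQ₁ ⊢
  rw [hQs_re]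
  exact hmax _ (isPositive_toEuclideanLin_iff.2 hQ) hQ₁ (by rwa [trace_toEuclideanLin])

/-- Rank-one optimality for the lower-boundary problem (15) of the paper: the feasible set
is nonempty and admits a rank-at-most-one maximizer of the jamming power at receiver 2. -/
theorem stmt2 (n : ℕ) (hn : 1 ≤ n) (g₁ g₂ : Fin n → ℂ) (hg₁ : g₁ ≠ 0)
    (P φ : ℝ) (hP : 0 < P) (hφ0 : 0 ≤ φ) (hφ : φ ≤ P * (star g₁ ⬝ᵥ g₁).re) :
    (∃ Q : Matrix (Fin n) (Fin n) ℂ,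
        Q.PosSemidef ∧ (star g₁ ⬝ᵥ Q.mulVec g₁).re = φ ∧ Q.trace.re ≤ P) ∧
    ∃ Qs : Matrix (Fin n) (Fin n) ℂ,
      (Qs.PosSemidef ∧ (star g₁ ⬝ᵥ Qs.mulVec g₁).re = φ ∧ Qs.trace.re ≤ P) ∧
      (∀ Q : Matrix (Fin n) (Fin n) ℂ,
        Q.PosSemidef → (star g₁ ⬝ᵥ Q.mulVec g₁).re = φ → Q.trace.re ≤ P →
          (star g₂ ⬝ᵥ Q.mulVec g₂).re ≤ (star g₂ ⬝ᵥ Qs.mulVec g₂).re) ∧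
      Qs.rank ≤ 1 :=
  stmt2_general n g₁ g₂ hg₁ P φ hφ0 hφ
end

section
/- Let c₁, c₂ ∈ ℂ, let P > 0, and let φ be a real number with P·|c₂|² < φ ≤ P·(|c₁|² + |c₂|²). Set a₀ = |c₁|² + |c₂|² and κ* = (|c₁|·√φ − |c₂|·√(a₀·P − φ))/a₀. Then κ* ≥ 0, and (κ*)² is the least element of the set S = { |α|² : α, β ∈ ℂ, |α·c₁ + β·c₂|² = φ, |α|² + |β|² ≤ P }; it is attained at α* = κ*·e^{−i·arg(c₁)} and β* = √(P − (κ*)²)·e^{−i·arg(c₂)}. (This is the second case of Theorem 1 of the paper: when the required jamming power at receiver 1 exceeds what zero-forcing jamming can deliver, the full power budget must be used and the minimal leakage toward receiver 2 is (κ*)².) -/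
/-
Write A = ‖c₁‖, B = ‖c₂‖, s = √φ, t = √(a₀P − φ) and μ = (A t + B s) / a₀. Then
κ A + μ B = s, κ² + μ² = P and A μ − B κ = t ≥ 0: (κ, μ) is the intersection of the circle
u² + v² = P with the line A u + B v = s having the smaller first coordinate. Rotating the phases
of c₁ and c₂ away makes α* c₁ = κ A and β* c₂ = μ B real and nonnegative, so (α*, β*) is feasible
with ‖α*‖ = κ. Conversely, by the triangle inequality every feasible (α, β) puts (‖α‖, ‖β‖) in
the disc u² + v² ≤ P on the far side A u + B v ≥ s of that line, where u ≥ κ.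
-/

open Complex

lemma le_of_mul_add_mul_le_of_sq_add_sq_le {A B κ μ u v : ℝ} (hA : 0 < A) (hB : 0 ≤ B)
    (hμ : 0 ≤ μ) (hBA : B * κ ≤ A * μ) (hline : κ * A + μ * B ≤ u * A + v * B)
    (hdisc : u ^ 2 + v ^ 2 ≤ κ ^ 2 + μ ^ 2) : κ ≤ u := by
  by_contra! hu
  have hv : μ < v := by nlinarith
  have hB_pos : 0 < B := by nlinarith
  -- A (κ - u) ≤ B (v - μ) by the line and (v - μ)(v + μ) ≤ (κ - u)(κ + u) by the disc
  have hsum : A * (v + μ) ≤ B * (κ + u) := by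
    have h : (κ - u) * (A * (v + μ)) ≤ (κ - u) * (B * (κ + u)) := by nlinarith
    exact le_of_mul_le_mul_left h (by linarith)
  -- but A (v + μ) > 2 A μ ≥ 2 B κ > B (κ + u)
  nlinarith

lemma le_norm_of_le_norm_mul_add_mul {c₁ c₂ α β : ℂ} {κ μ : ℝ} (hc₁ : 0 < ‖c₁‖) (hμ : 0 ≤ μ)
    (hBA : ‖c₂‖ * κ ≤ ‖c₁‖ * μ) (hline : κ * ‖c₁‖ + μ * ‖c₂‖ ≤ ‖α * c₁ + β * c₂‖)
    (hdisc : ‖α‖ ^ 2 + ‖β‖ ^ 2 ≤ κ ^ 2 + μ ^ 2) : κ ≤ ‖α‖ := by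
  refine le_of_mul_add_mul_le_of_sq_add_sq_le hc₁ (norm_nonneg _) hμ hBA ?_ hdisc
  simpa only [norm_mul] using hline.trans (norm_add_le _ _)

lemma ofReal_mul_exp_neg_arg_mul_I_mul (r : ℝ) (z : ℂ) :
    (r : ℂ) * exp (-(z.arg : ℂ) * I) * z = ((r * ‖z‖ : ℝ) : ℂ) := by
  have hexp : exp (-(z.arg : ℂ) * I) * exp (z.arg * I) = 1 := by
    rw [← exp_add, neg_mul, neg_add_cancel, exp_zero]
  push_cast
  linear_combination (r * exp (-(z.arg : ℂ) * I)) * (norm_mul_exp_arg_mul_I z).symm +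
    (r * ‖z‖ : ℂ) * hexp

lemma norm_ofReal_mul_exp_neg_mul_I (r θ : ℝ) : ‖(r : ℂ) * exp (-(θ : ℂ) * I)‖ = |r| := by
  simp [norm_exp]

lemma norm_ofReal_mul_exp_neg_arg_mul_I_mul_add (κ μ : ℝ) (c₁ c₂ : ℂ) :
    ‖(κ : ℂ) * exp (-(c₁.arg : ℂ) * I) * c₁ + (μ : ℂ) * exp (-(c₂.arg : ℂ) * I) * c₂‖ =
      |κ * ‖c₁‖ + μ * ‖c₂‖| := by
  rw [ofReal_mul_exp_neg_arg_mul_I_mul, ofReal_mul_exp_neg_arg_mul_I_mul, ← ofReal_add,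
    norm_real, Real.norm_eq_abs]

lemma line_inter_circle_of_eq_div {A B P φ κ : ℝ} (hA : 0 < A) (hB : 0 ≤ B)
    (hφl : P * B ^ 2 ≤ φ) (hφu : φ ≤ P * (A ^ 2 + B ^ 2))
    (hκ : κ = (A * √φ - B * √((A ^ 2 + B ^ 2) * P - φ)) / (A ^ 2 + B ^ 2)) :
    0 ≤ κ ∧ κ ^ 2 ≤ P ∧ κ * A + √(P - κ ^ 2) * B = √φ ∧ B * κ ≤ A * √(P - κ ^ 2) := by
  set a₀ := A ^ 2 + B ^ 2 with ha₀_def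
  have ha₀ : 0 < a₀ := by positivity
  have hP : 0 ≤ P := by nlinarith [pow_pos hA 2]
  have hs : √φ ^ 2 = φ := Real.sq_sqrt (by nlinarith)
  have ht : √(a₀ * P - φ) ^ 2 = a₀ * P - φ := Real.sq_sqrt (by linarith)
  set s := √φ
  set t := √(a₀ * P - φ)
  set μ := (A * t + B * s) / a₀
  have hμ : 0 ≤ μ := by positivity
  have hκ_def : κ * a₀ = A * s - B * t := hκ ▸ div_mul_cancel₀ _ ha₀.ne'
  have hμ_def : μ * a₀ = A * t + B * s := div_mul_cancel₀ _ ha₀.ne'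
  clear_value μ a₀
  have hline : κ * A + μ * B = s := mul_left_cancel₀ ha₀.ne' <| by
    linear_combination A * hκ_def + B * hμ_def - s * ha₀_def
  have hgap : A * μ - B * κ = t := mul_left_cancel₀ ha₀.ne' <| by
    linear_combination A * hμ_def - B * hκ_def - t * ha₀_def
  have hcirc : κ ^ 2 + μ ^ 2 = P := mul_left_cancel₀ (pow_ne_zero 2 ha₀.ne') <| by
    linear_combination (κ * a₀ + A * s - B * t) * hκ_def +
      (μ * a₀ + A * t + B * s) * hμ_def - (s ^ 2 + t ^ 2) * ha₀_def + a₀ * (hs + ht)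
  have hμ_eq : √(P - κ ^ 2) = μ := by rw [← hcirc, add_sub_cancel_left, Real.sqrt_sq hμ]
  -- (A s)² - (B t)² = a₀ (φ - P B²) ≥ 0
  have hBt : B * t ≤ A * s :=
    (sq_le_sq₀ (by positivity) (by positivity)).1 (by nlinarith)
  refine ⟨(mul_nonneg_iff_of_pos_right ha₀).1 (hκ_def ▸ sub_nonneg.2 hBt),
    by linarith [sq_nonneg μ], by rw [hμ_eq, hline], ?_⟩
  rw [hμ_eq]
  linarith [Real.sqrt_nonneg (a₀ * P - φ)]

theorem stmt5_general (c₁ c₂ : ℂ) (P φ : ℝ)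
    (hφl : P * ‖c₂‖ ^ 2 < φ)
    (hφu : φ ≤ P * (‖c₁‖ ^ 2 + ‖c₂‖ ^ 2)) :
    let a₀ : ℝ := ‖c₁‖ ^ 2 + ‖c₂‖ ^ 2
    let κ : ℝ := (‖c₁‖ * Real.sqrt φ -
      ‖c₂‖ * Real.sqrt (a₀ * P - φ)) / a₀
    let α : ℂ := (κ : ℂ) * Complex.exp (-(c₁.arg : ℂ) * Complex.I)
    let β : ℂ := ((Real.sqrt (P - κ ^ 2) : ℝ) : ℂ) * Complex.exp (-(c₂.arg : ℂ) * Complex.I)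
    0 ≤ κ ∧
    IsLeast {x : ℝ | ∃ α' β' : ℂ,
        ‖α' * c₁ + β' * c₂‖ ^ 2 = φ ∧
        ‖α'‖ ^ 2 + ‖β'‖ ^ 2 ≤ P ∧
        x = ‖α'‖ ^ 2} (κ ^ 2) ∧
    ‖α * c₁ + β * c₂‖ ^ 2 = φ ∧
    ‖α‖ ^ 2 + ‖β‖ ^ 2 ≤ P ∧
    ‖α‖ ^ 2 = κ ^ 2 := by
  intro a₀ κ α β
  have hc₁ : 0 < ‖c₁‖ := norm_pos_iff.2 (by rintro rfl; simp at hφu; linarith)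
  have hφ : 0 ≤ φ := by nlinarith [pow_pos hc₁ 2]
  obtain ⟨hκ, hκP, hline, hgap⟩ :=
    line_inter_circle_of_eq_div hc₁ (norm_nonneg c₂) hφl.le hφu rfl
  have hα : ‖α‖ = κ := (norm_ofReal_mul_exp_neg_mul_I _ _).trans (abs_of_nonneg hκ)
  have hβ : ‖β‖ = √(P - κ ^ 2) :=
    (norm_ofReal_mul_exp_neg_mul_I _ _).trans (abs_of_nonneg (Real.sqrt_nonneg _))
  have hvalue : ‖α * c₁ + β * c₂‖ ^ 2 = φ := by
    rw [norm_ofReal_mul_exp_neg_arg_mul_I_mul_add, hline, sq_abs, Real.sq_sqrt hφ]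
  have hpower : ‖α‖ ^ 2 + ‖β‖ ^ 2 = P := by
    rw [hα, hβ, Real.sq_sqrt (sub_nonneg.2 hκP), add_sub_cancel]
  refine ⟨hκ, ⟨⟨α, β, hvalue, hpower.le, by rw [hα]⟩, ?_⟩, hvalue, hpower.le, by rw [hα]⟩
  rintro _ ⟨α', β', hφ', hP', rfl⟩
  have hline' : κ * ‖c₁‖ + √(P - κ ^ 2) * ‖c₂‖ ≤ ‖α' * c₁ + β' * c₂‖ := by
    rw [hline, ← hφ', Real.sqrt_sq (norm_nonneg _)]
  have hdisc : ‖α'‖ ^ 2 + ‖β'‖ ^ 2 ≤ κ ^ 2 + √(P - κ ^ 2) ^ 2 := by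
    rwa [Real.sq_sqrt (sub_nonneg.2 hκP), add_sub_cancel]
  exact pow_le_pow_left₀ hκ
    (le_norm_of_le_norm_mul_add_mul hc₁ (Real.sqrt_nonneg _) hgap hline' hdisc) 2

/-- Second case of Theorem 1 of the paper: when P·|c₂|² < φ ≤ P·(|c₁|²+|c₂|²), the minimum
of |α|² over the feasible set is (κ*)², attained with full power. -/
theorem stmt5 (c₁ c₂ : ℂ) (P φ : ℝ) (hP : 0 < P)
    (hφl : P * ‖c₂‖ ^ 2 < φ)
    (hφu : φ ≤ P * (‖c₁‖ ^ 2 + ‖c₂‖ ^ 2)) :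
    let a₀ : ℝ := ‖c₁‖ ^ 2 + ‖c₂‖ ^ 2
    let κ : ℝ := (‖c₁‖ * Real.sqrt φ -
      ‖c₂‖ * Real.sqrt (a₀ * P - φ)) / a₀
    let α : ℂ := (κ : ℂ) * Complex.exp (-(c₁.arg : ℂ) * Complex.I)
    let β : ℂ := ((Real.sqrt (P - κ ^ 2) : ℝ) : ℂ) * Complex.exp (-(c₂.arg : ℂ) * Complex.I)
    0 ≤ κ ∧
    IsLeast {x : ℝ | ∃ α' β' : ℂ,
        ‖α' * c₁ + β' * c₂‖ ^ 2 = φ ∧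
        ‖α'‖ ^ 2 + ‖β'‖ ^ 2 ≤ P ∧
        x = ‖α'‖ ^ 2} (κ ^ 2) ∧
    ‖α * c₁ + β * c₂‖ ^ 2 = φ ∧
    ‖α‖ ^ 2 + ‖β‖ ^ 2 ≤ P ∧
    ‖α‖ ^ 2 = κ ^ 2 :=
  stmt5_general c₁ c₂ P φ hφl hφu
end

section
/- Let n ≥ 1, let g₁, g₂ ∈ ℂⁿ be linearly independent, and let a₁, a₂, c₁, c₂, P_max > 0. With b₂ = |g₁ᴴĝ₂⊥|, define R₁^ZF2 = log₂(1 + a₁/(P_max·b₂² + c₁)) and R₁^max = log₂(1 + a₁/c₁). Then for every real R₁ with R₁^ZF2 ≤ R₁ ≤ R₁^max, the set { R₂^S(Q) : Q ∈ Ω, R₁^S(Q) = R₁ } has greatest element f_max(R₁) = log₂(1 + a₂/c₂). (This is the first case of Theorem 2 of the paper: for R₁ at least the zero-forcing rate R₁^ZF2, driving link 1's rate down to R₁ costs nothing at receiver 2, so the maximal rate of link 2 is unreduced.) -/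
/-!
Jamming only adds the nonnegative interference `g₂ᴴ Q g₂` at receiver 2, so `log₂ (1 + a₂ / c₂)`
bounds the rate of link 2. It is attained by zero-forcing: `Q = t • ĝ₂⊥ ĝ₂⊥ᴴ` is invisible to
receiver 2 while `g₁ᴴ Q g₁ = t b₂²`, which sweeps `[0, P_max b₂²]` as `t` runs over `[0, P_max]`;
by the intermediate value theorem, the rate of link 1 then takes every value in `[R₁^ZF2, R₁^max]`.
-/

open Matrix
open scoped ComplexOrder

namespace Matrix

variable {ι : Type*} [Fintype ι]

/-- `unitVec 0 = 0`, since `0⁻¹ = 0`. -/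
noncomputable def unitVec (v : ι → ℂ) : ι → ℂ := (Real.sqrt (star v ⬝ᵥ v).re)⁻¹ • v

lemma ofReal_re_star_dotProduct_self (v : ι → ℂ) : ((star v ⬝ᵥ v).re : ℂ) = star v ⬝ᵥ v :=
  (Complex.eq_re_of_ofReal_le (r := 0) (by simp)).symm

lemma re_star_dotProduct_self_pos {v : ι → ℂ} (hv : v ≠ 0) : 0 < (star v ⬝ᵥ v).re :=
  (Complex.pos_iff.mp (dotProduct_star_self_pos_iff.mpr hv)).1

lemma star_dotProduct_unitVec (v w : ι → ℂ) :
    star v ⬝ᵥ unitVec w = ((Real.sqrt (star w ⬝ᵥ w).re)⁻¹ : ℝ) * (star v ⬝ᵥ w) := by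
  rw [unitVec, ← Complex.coe_smul, dotProduct_smul, smul_eq_mul]

lemma star_unitVec_dotProduct (v w : ι → ℂ) :
    star (unitVec v) ⬝ᵥ w = ((Real.sqrt (star v ⬝ᵥ v).re)⁻¹ : ℝ) * (star v ⬝ᵥ w) := by
  rw [unitVec, ← Complex.coe_smul, star_smul, smul_dotProduct, Complex.star_def,
    Complex.conj_ofReal, smul_eq_mul]

lemma star_unitVec_dotProduct_unitVec_self {v : ι → ℂ} (hv : v ≠ 0) :
    star (unitVec v) ⬝ᵥ unitVec v = 1 := by
  have hN := re_star_dotProduct_self_pos hv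
  have := Real.sq_sqrt hN.le
  rw [star_unitVec_dotProduct, star_dotProduct_unitVec, ← ofReal_re_star_dotProduct_self]
  norm_cast
  field_simp
  linarith

lemma re_star_unitVec_dotProduct_self_le_one (v : ι → ℂ) :
    (star (unitVec v) ⬝ᵥ unitVec v).re ≤ 1 := by
  by_cases hv : v = 0
  · simp [hv, unitVec]
  · simp [star_unitVec_dotProduct_unitVec_self hv]

/-- For `v = g₂`, `w = g₁` the normalized vector is the paper's `ĝ₂⊥`. -/
lemma star_dotProduct_unitVec_sub_proj_eq_zero (v w : ι → ℂ) :
    star v ⬝ᵥ unitVec (w - (star (unitVec v) ⬝ᵥ w) • unitVec v) = 0 := by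
  rw [star_dotProduct_unitVec, mul_eq_zero]
  right
  by_cases hv : v = 0
  · simp [hv]
  have hu : star (unitVec v) ⬝ᵥ (w - (star (unitVec v) ⬝ᵥ w) • unitVec v) = 0 := by
    rw [dotProduct_sub, dotProduct_smul, star_unitVec_dotProduct_unitVec_self hv, smul_eq_mul,
      mul_one, sub_self]
  rw [star_unitVec_dotProduct] at hu
  refine (mul_eq_zero.mp hu).resolve_left ?_
  simp [(re_star_dotProduct_self_pos hv).ne', (re_star_dotProduct_self_pos hv).le]

lemma re_trace_smul_vecMulVec_star (t : ℝ) (u : ι → ℂ) :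
    (t • vecMulVec u (star u)).trace.re = t * (star u ⬝ᵥ u).re := by
  rw [trace_smul, trace_vecMulVec, dotProduct_comm]
  simp

lemma re_star_dotProduct_smul_vecMulVec_star_mulVec (t : ℝ) (u w : ι → ℂ) :
    (star w ⬝ᵥ (t • vecMulVec u (star u)) *ᵥ w).re = t * ‖star w ⬝ᵥ u‖ ^ 2 := by
  rw [smul_mulVec, vecMulVec_mulVec, dotProduct_smul, dotProduct_smul, star_dotProduct u w]
  simp [Complex.mul_conj, Complex.normSq_eq_norm_sq, -Complex.ofReal_pow]

end Matrix

lemma logb_one_add_div_add_le {a c x : ℝ} (ha : 0 ≤ a) (hc : 0 < c) (hx : 0 ≤ x) :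
    Real.logb 2 (1 + a / (x + c)) ≤ Real.logb 2 (1 + a / c) := by
  gcongr
  · norm_num
  · linarith

lemma exists_mem_Icc_logb_one_add_div_add_eq {a c B R : ℝ} (ha : 0 ≤ a) (hc : 0 < c)
    (hB : 0 ≤ B) (hl : Real.logb 2 (1 + a / (B + c)) ≤ R) (hu : R ≤ Real.logb 2 (1 + a / c)) :
    ∃ x ∈ Set.Icc 0 B, Real.logb 2 (1 + a / (x + c)) = R := by
  have hcont : ContinuousOn (fun x => Real.logb 2 (1 + a / (x + c))) (Set.Icc 0 B) := by
    refine ContinuousOn.logb ?_ fun x hx => ?_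
    · exact continuousOn_const.add <| continuousOn_const.div
        (continuousOn_id.add continuousOn_const) fun x hx => by linarith [hx.1]
    · have := hx.1
      positivity
  exact intermediate_value_Icc' hB hcont ⟨hl, by simpa using hu⟩

theorem stmt6_general (n : ℕ) (g₁ g₂ : Fin n → ℂ)
    (a₁ a₂ c₁ c₂ Pmax : ℝ)
    (ha₁ : 0 < a₁) (ha₂ : 0 < a₂) (hc₁ : 0 < c₁) (hc₂ : 0 < c₂) (hPmax : 0 < Pmax)
    (gh2 gperp ghperp : Fin n → ℂ)
    (hgh2 : gh2 = (Real.sqrt ((star g₂ ⬝ᵥ g₂).re))⁻¹ • g₂)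
    (hgperp : gperp = g₁ - (star gh2 ⬝ᵥ g₁) • gh2)
    (hghperp : ghperp = (Real.sqrt ((star gperp ⬝ᵥ gperp).re))⁻¹ • gperp)
    (b₂ : ℝ) (hb₂ : b₂ = ‖star g₁ ⬝ᵥ ghperp‖)
    (R₁ : ℝ)
    (hR₁l : Real.logb 2 (1 + a₁ / (Pmax * b₂ ^ 2 + c₁)) ≤ R₁)
    (hR₁u : R₁ ≤ Real.logb 2 (1 + a₁ / c₁)) :
    IsGreatest
      {r : ℝ | ∃ Q : Matrix (Fin n) (Fin n) ℂ, Q.PosSemidef ∧ Q.trace.re ≤ Pmax ∧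
        Real.logb 2 (1 + a₁ / ((star g₁ ⬝ᵥ Q.mulVec g₁).re + c₁)) = R₁ ∧
        r = Real.logb 2 (1 + a₂ / ((star g₂ ⬝ᵥ Q.mulVec g₂).re + c₂))}
      (Real.logb 2 (1 + a₂ / c₂)) := by
  replace hgh2 : gh2 = unitVec g₂ := hgh2
  replace hghperp : ghperp = unitVec gperp := hghperp
  have horth : star g₂ ⬝ᵥ ghperp = 0 := by
    rw [hghperp, hgperp, hgh2]
    exact star_dotProduct_unitVec_sub_proj_eq_zero g₂ g₁
  obtain ⟨x, ⟨hx₀, hxP⟩, hx⟩ :=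
    exists_mem_Icc_logb_one_add_div_add_eq ha₁.le hc₁ (by positivity) hR₁l hR₁u
  -- If `b₂ = 0` then `t = 0` (as `x / 0 = 0`), but the bounds on `x` force `x = 0` too.
  set t := x / b₂ ^ 2
  have ht : t * b₂ ^ 2 = x := div_mul_cancel_of_imp fun h => by
    rw [h, mul_zero] at hxP
    exact le_antisymm hxP hx₀
  refine ⟨⟨t • vecMulVec ghperp (star ghperp),
    (posSemidef_vecMulVec_self_star _).smul (by positivity), ?_, ?_, ?_⟩, ?_⟩
  · rw [re_trace_smul_vecMulVec_star, hghperp]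
    calc t * (star (unitVec gperp) ⬝ᵥ unitVec gperp).re
        ≤ t * 1 := by gcongr; exact re_star_unitVec_dotProduct_self_le_one gperp
      _ ≤ Pmax := by
        rw [mul_one]
        exact div_le_of_le_mul₀ (by positivity) hPmax.le hxP
  · rw [re_star_dotProduct_smul_vecMulVec_star_mulVec, ← hb₂, ht, hx]
  · rw [re_star_dotProduct_smul_vecMulVec_star_mulVec, horth]
    simp
  · rintro r ⟨Q, hQ, -, -, rfl⟩
    exact logb_one_add_div_add_le ha₂.le hc₂ (hQ.re_dotProduct_nonneg g₂)

/-- First case of Theorem 2 of the paper: for R₁ between the zero-forcing rate R₁^ZF2 and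
R₁^max, the greatest achievable rate of suspicious link 2 given R₁^S(Q) = R₁ is the
unjammed rate log₂(1 + a₂/c₂). -/
theorem stmt6 (n : ℕ) (hn : 1 ≤ n) (g₁ g₂ : Fin n → ℂ)
    (hli : LinearIndependent ℂ ![g₁, g₂])
    (a₁ a₂ c₁ c₂ Pmax : ℝ)
    (ha₁ : 0 < a₁) (ha₂ : 0 < a₂) (hc₁ : 0 < c₁) (hc₂ : 0 < c₂) (hPmax : 0 < Pmax)
    (gh2 gperp ghperp : Fin n → ℂ)
    (hgh2 : gh2 = (Real.sqrt ((star g₂ ⬝ᵥ g₂).re))⁻¹ • g₂)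
    (hgperp : gperp = g₁ - (star gh2 ⬝ᵥ g₁) • gh2)
    (hghperp : ghperp = (Real.sqrt ((star gperp ⬝ᵥ gperp).re))⁻¹ • gperp)
    (b₂ : ℝ) (hb₂ : b₂ = ‖star g₁ ⬝ᵥ ghperp‖)
    (R₁ : ℝ)
    (hR₁l : Real.logb 2 (1 + a₁ / (Pmax * b₂ ^ 2 + c₁)) ≤ R₁)
    (hR₁u : R₁ ≤ Real.logb 2 (1 + a₁ / c₁)) :
    IsGreatest
      {r : ℝ | ∃ Q : Matrix (Fin n) (Fin n) ℂ, Q.PosSemidef ∧ Q.trace.re ≤ Pmax ∧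
        Real.logb 2 (1 + a₁ / ((star g₁ ⬝ᵥ Q.mulVec g₁).re + c₁)) = R₁ ∧
        r = Real.logb 2 (1 + a₂ / ((star g₂ ⬝ᵥ Q.mulVec g₂).re + c₂))}
      (Real.logb 2 (1 + a₂ / c₂)) :=
  stmt6_general n g₁ g₂ a₁ a₂ c₁ c₂ Pmax ha₁ ha₂ hc₁ hc₂ hPmax gh2 gperp ghperp hgh2 hgperp hghperp
    b₂ hb₂ R₁ hR₁l hR₁u
end

section
/- Let a₁, a₂, c₁, c₂, P, G > 0, b₁ > 0 and b₂ ≥ 0 be real numbers. Define φ(R) = a₁/(2^R − 1) − c₁, κ*(R) = (b₁·√(φ(R)) − b₂·√((b₁² + b₂²)·P − φ(R)))/(b₁² + b₂²), and f_max(R) = log₂(1 + a₂/(κ*(R)²·G + c₂)). Define R₁^min = log₂(1 + a₁/(P·(b₁² + b₂²) + c₁)) and R₁^ZF2 = log₂(1 + a₁/(P·b₂² + c₁)). Then f_max is strictly increasing on the interval [R₁^min, R₁^ZF2). (This is Proposition 1 of the paper: the upper boundary curve of the achievable rate region for the two suspicious links is an increasing function of R₁ below the zero-forcing rate R₁^ZF2.)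 -/
/-!
Write `f_max = r ∘ κ* ∘ φ`, where `r κ = log₂ (1 + a₂ / (κ² G + c₂))` and `κ*` is viewed as a
function of the jamming power `p = φ(R)`. On `[R₁^min, R₁^ZF2)` the jamming power `φ` is strictly
decreasing with values in `(P b₂², P (b₁² + b₂²)]`. On that range `κ*` is positive, because
`b₂² ((b₁² + b₂²) P - p) < b₁² p` is equivalent to `P b₂² < p`, and it is strictly increasing in `p`
on `p ≥ 0`, since `b₁ √p` grows while `b₂ √((b₁² + b₂²) P - p)` shrinks. Finally `r` is strictly
decreasing on `κ ≥ 0`, so the composite is strictly increasing.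
-/

open Real Set

noncomputable def jammingPower (a₁ c₁ R : ℝ) : ℝ := a₁ / ((2 : ℝ) ^ R - 1) - c₁

noncomputable def kappaStar (b₁ b₂ P p : ℝ) : ℝ :=
  (b₁ * √p - b₂ * √((b₁ ^ 2 + b₂ ^ 2) * P - p)) / (b₁ ^ 2 + b₂ ^ 2)

noncomputable def jammedRate (a₂ c₂ G κ : ℝ) : ℝ := logb 2 (1 + a₂ / (κ ^ 2 * G + c₂))

theorem Ico_logb_two_one_add_subset_Ioi {x y : ℝ} (hx : 0 < x) :
    Ico (logb 2 (1 + x)) y ⊆ Ioi 0 := fun _ hR =>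
  (logb_pos one_lt_two (lt_add_of_pos_right 1 hx)).trans_le hR.1

theorem jammingPower_strictAntiOn {a₁ : ℝ} (c₁ : ℝ) (ha₁ : 0 < a₁) :
    StrictAntiOn (jammingPower a₁ c₁) (Ioi 0) := by
  intro R hR S _ hRS
  have hR₁ : 0 < (2 : ℝ) ^ R - 1 := sub_pos.2 (one_lt_rpow one_lt_two hR)
  unfold jammingPower
  gcongr
  exact rpow_lt_rpow_of_exponent_lt one_lt_two hRS

theorem jammingPower_le_of_logb_le {a₁ c₁ d R : ℝ} (ha₁ : 0 < a₁) (hd : 0 < d + c₁)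
    (hR : logb 2 (1 + a₁ / (d + c₁)) ≤ R) : jammingPower a₁ c₁ R ≤ d := by
  rw [logb_le_iff_le_rpow one_lt_two (by positivity)] at hR
  have h : a₁ / (d + c₁) ≤ (2 : ℝ) ^ R - 1 := by linarith
  have hR₁ : 0 < (2 : ℝ) ^ R - 1 := (div_pos ha₁ hd).trans_le h
  rw [div_le_iff₀ hd] at h
  rw [jammingPower, sub_le_iff_le_add, div_le_iff₀ hR₁]
  linarith

theorem lt_jammingPower_of_lt_logb {a₁ c₁ d R : ℝ} (ha₁ : 0 < a₁) (hd : 0 < d + c₁)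
    (hR₀ : 0 < R) (hR : R < logb 2 (1 + a₁ / (d + c₁))) : d < jammingPower a₁ c₁ R := by
  rw [lt_logb_iff_rpow_lt one_lt_two (by positivity)] at hR
  have hR₁ : 0 < (2 : ℝ) ^ R - 1 := sub_pos.2 (one_lt_rpow one_lt_two hR₀)
  have h : (2 : ℝ) ^ R - 1 < a₁ / (d + c₁) := by linarith
  rw [lt_div_iff₀ hd] at h
  rw [jammingPower, lt_sub_iff_add_lt, lt_div_iff₀ hR₁]
  linarith

theorem mapsTo_jammingPower {a₁ c₁ d e : ℝ} (ha₁ : 0 < a₁) (hd : 0 < d + c₁) (hde : d ≤ e) :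
    MapsTo (jammingPower a₁ c₁)
      (Ico (logb 2 (1 + a₁ / (e + c₁))) (logb 2 (1 + a₁ / (d + c₁)))) (Ioc d e) := by
  have he : 0 < e + c₁ := by linarith
  intro R hR
  have hR₀ : 0 < R := Ico_logb_two_one_add_subset_Ioi (div_pos ha₁ he) hR
  exact ⟨lt_jammingPower_of_lt_logb ha₁ hd hR₀ hR.2, jammingPower_le_of_logb_le ha₁ he hR.1⟩

theorem kappaStar_strictMonoOn {b₁ : ℝ} (b₂ P : ℝ) (hb₁ : 0 < b₁) (hb₂ : 0 ≤ b₂) :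
    StrictMonoOn (kappaStar b₁ b₂ P) (Ici 0) := by
  intro p hp q _ hpq
  have hB : 0 < b₁ ^ 2 + b₂ ^ 2 := by positivity
  have hfirst : b₁ * √p < b₁ * √q := by gcongr
  have hsecond :
      b₂ * √((b₁ ^ 2 + b₂ ^ 2) * P - q) ≤ b₂ * √((b₁ ^ 2 + b₂ ^ 2) * P - p) := by gcongr
  unfold kappaStar
  gcongr ?_ / _
  linarith

theorem kappaStar_pos {b₁ b₂ P p : ℝ} (hb₁ : 0 < b₁) (hp : P * b₂ ^ 2 < p)
    (hpP : p ≤ P * (b₁ ^ 2 + b₂ ^ 2)) : 0 < kappaStar b₁ b₂ P p := by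
  have hB : 0 < b₁ ^ 2 + b₂ ^ 2 := by positivity
  have hp₀ : 0 < p := by nlinarith
  have hrest : 0 ≤ (b₁ ^ 2 + b₂ ^ 2) * P - p := by linarith
  have hsq : (b₂ * √((b₁ ^ 2 + b₂ ^ 2) * P - p)) ^ 2 < (b₁ * √p) ^ 2 := by
    rw [mul_pow, mul_pow, sq_sqrt hp₀.le, sq_sqrt hrest]
    nlinarith
  have hlt := (abs_lt_of_sq_lt_sq' hsq (by positivity)).2
  exact div_pos (sub_pos.2 hlt) hB

theorem jammedRate_strictAntiOn {a₂ c₂ G : ℝ} (ha₂ : 0 < a₂) (hc₂ : 0 < c₂) (hG : 0 < G) :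
    StrictAntiOn (jammedRate a₂ c₂ G) (Ici 0) := by
  intro κ hκ κ' _ hκκ'
  have : 0 < 1 + a₂ / (κ' ^ 2 * G + c₂) := by positivity
  unfold jammedRate
  gcongr
  exact one_lt_two

/-- Proposition 1 of the paper: the upper boundary curve f_max of the achievable rate
region for the two suspicious links is strictly increasing on [R₁^min, R₁^ZF2). -/
theorem stmt8 (a₁ a₂ c₁ c₂ P G b₁ b₂ : ℝ)
    (ha₁ : 0 < a₁) (ha₂ : 0 < a₂) (hc₁ : 0 < c₁) (hc₂ : 0 < c₂)
    (hP : 0 < P) (hG : 0 < G) (hb₁ : 0 < b₁) (hb₂ : 0 ≤ b₂) :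
    StrictMonoOn
      (fun R : ℝ => Real.logb 2 (1 + a₂ /
        (((b₁ * Real.sqrt (a₁ / ((2 : ℝ) ^ R - 1) - c₁) -
            b₂ * Real.sqrt ((b₁ ^ 2 + b₂ ^ 2) * P - (a₁ / ((2 : ℝ) ^ R - 1) - c₁))) /
          (b₁ ^ 2 + b₂ ^ 2)) ^ 2 * G + c₂)))
      (Set.Ico (Real.logb 2 (1 + a₁ / (P * (b₁ ^ 2 + b₂ ^ 2) + c₁)))
        (Real.logb 2 (1 + a₁ / (P * b₂ ^ 2 + c₁)))) := by
  have hpow : P * b₂ ^ 2 ≤ P * (b₁ ^ 2 + b₂ ^ 2) := by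
    gcongr
    exact le_add_of_nonneg_left (sq_nonneg b₁)
  have hmaps := mapsTo_jammingPower (c₁ := c₁) ha₁ (by positivity) hpow
  have hφ : StrictAntiOn (jammingPower a₁ c₁) (Ico (logb 2 (1 + a₁ / (P * (b₁ ^ 2 + b₂ ^ 2) + c₁)))
      (logb 2 (1 + a₁ / (P * b₂ ^ 2 + c₁)))) :=
    (jammingPower_strictAntiOn c₁ ha₁).mono (Ico_logb_two_one_add_subset_Ioi (by positivity))
  have hκ : StrictAntiOn (kappaStar b₁ b₂ P ∘ jammingPower a₁ c₁) _ :=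
    (kappaStar_strictMonoOn b₂ P hb₁ hb₂).comp_strictAntiOn hφ
      (hmaps.mono_right fun _ hp => (by positivity : 0 ≤ P * b₂ ^ 2).trans hp.1.le)
  exact (jammedRate_strictAntiOn ha₂ hc₂ hG).comp hκ
    fun _ hR => (kappaStar_pos hb₁ (hmaps hR).1 (hmaps hR).2).le
end

section
/- Let n ≥ 1, let g₁, g₂ ∈ ℂⁿ be linearly independent, and let a₁, a₂, c₁, c₂, P_max > 0. Define ĝ₁ = g₁/‖g₁‖, g₁⊥ = g₂ − (ĝ₁ᴴg₂)ĝ₁, ĝ₁⊥ = g₁⊥/‖g₁⊥‖, B₁ = |g₂ᴴĝ₁|, B₂ = |g₂ᴴĝ₁⊥|, R₁^min = log₂(1 + a₁/(P_max·‖g₁‖² + c₁)) and R₁^max = log₂(1 + a₁/c₁). Then for every real R₁ with R₁^min ≤ R₁ ≤ R₁^max, setting φ = a₁/(2^{R₁} − 1) − c₁ and m = √φ/‖g₁‖, the set { R₂^S(Q) : Q ∈ Ω, R₁^S(Q) = R₁ } has least element f_min(R₁) = log₂(1 + a₂/((m·B₁ + √(P_max − m²)·B₂)² + c₂)). (This is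 the consequence of Theorem 3 of the paper: the closed form of the lower boundary of the achievable rate region for the two suspicious links.) -/
/-!
Put `u = ĝ₁` and `v = ĝ₁⊥`: they are orthonormal and `g₂ = (uᴴg₂) u + (vᴴg₂) v`, while
`g₁ᴴQg₁ = ‖g₁‖² uᴴQu`. Since `x ↦ log₂(1 + a / (x + c))` is strictly decreasing, the constraint
`R₁^S(Q) = R₁` says exactly `uᴴQu = m²`, and minimising `R₂^S` means maximising `g₂ᴴQg₂`.
Now `z ↦ √(zᴴQz)` is a seminorm, so `√(g₂ᴴQg₂) ≤ B₁ √(uᴴQu) + B₂ √(vᴴQv)`, and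
`uᴴQu + vᴴQv ≤ tr Q ≤ P_max` (Bessel's inequality for each rank-one summand of `Q`), giving
`g₂ᴴQg₂ ≤ (m B₁ + √(P_max - m²) B₂)²`. Equality holds for `Q = wwᴴ` with
`w = m p u + √(P_max - m²) q v`, the unimodular `p`, `q` aligning the phases of `g₂ᴴu`, `g₂ᴴv`.
-/

open Matrix
open scoped ComplexOrder

section Rate

open Real

variable {a b c x R : ℝ}

theorem logb_one_add_div_pos (hb : 1 < b) (ha : 0 < a) (hx : 0 < x) :
    0 < logb b (1 + a / x) :=
  logb_pos hb (lt_add_of_pos_right 1 (div_pos ha hx))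

theorem logb_one_add_div_le_iff (hb : 1 < b) (ha : 0 < a) (hx : 0 < x) (hR : 0 < R) :
    logb b (1 + a / x) ≤ R ↔ a / (b ^ R - 1) ≤ x := by
  have hbR : 0 < b ^ R - 1 := sub_pos.2 (one_lt_rpow hb hR)
  rw [logb_le_iff_le_rpow hb (by positivity), ← le_sub_iff_add_le', div_le_iff₀ hx,
    div_le_iff₀ hbR, mul_comm]

theorem le_logb_one_add_div_iff (hb : 1 < b) (ha : 0 < a) (hx : 0 < x) (hR : 0 < R) :
    R ≤ logb b (1 + a / x) ↔ x ≤ a / (b ^ R - 1) := by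
  have hbR : 0 < b ^ R - 1 := sub_pos.2 (one_lt_rpow hb hR)
  rw [le_logb_iff_rpow_le hb (by positivity), ← sub_le_iff_le_add', le_div_iff₀ hx,
    le_div_iff₀ hbR, mul_comm]

theorem logb_one_add_div_eq_iff (hb : 1 < b) (ha : 0 < a) (hx : 0 < x) (hR : 0 < R) :
    logb b (1 + a / x) = R ↔ x = a / (b ^ R - 1) := by
  rw [le_antisymm_iff, logb_one_add_div_le_iff hb ha hx hR, le_logb_one_add_div_iff hb ha hx hR,
    and_comm, ← le_antisymm_iff]

theorem antitoneOn_logb_one_add_div (hb : 1 < b) (ha : 0 ≤ a) (hc : 0 < c) :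
    AntitoneOn (fun s => logb b (1 + a / (s + c))) (Set.Ici 0) := by
  intro s hs t ht hst
  simp only [Set.mem_Ici] at hs ht
  exact logb_le_logb_of_le hb (by positivity) (by gcongr)

end Rate

namespace Matrix

variable {ι : Type*} [Fintype ι]

theorem star_dotProduct_eq_inner (x y : ι → ℂ) :
    star x ⬝ᵥ y = inner ℂ (WithLp.toLp 2 x) (WithLp.toLp 2 y) := by
  rw [EuclideanSpace.inner_toLp_toLp, dotProduct_comm]

theorem star_dotProduct_self_eq_norm_sq (x : ι → ℂ) :
    star x ⬝ᵥ x = ((‖WithLp.toLp 2 x‖ ^ 2 : ℝ) : ℂ) := by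
  rw [star_dotProduct_eq_inner, inner_self_eq_norm_sq_to_K]
  norm_cast

theorem star_dotProduct_vecMulVec_mulVec (x w y : ι → ℂ) :
    star x ⬝ᵥ vecMulVec w (star w) *ᵥ y = (star x ⬝ᵥ w) * (star w ⬝ᵥ y) := by
  rw [vecMulVec_mulVec, op_smul_eq_smul, dotProduct_smul, smul_eq_mul, mul_comm]

theorem re_star_dotProduct_vecMulVec_mulVec_self (w x : ι → ℂ) :
    (star x ⬝ᵥ vecMulVec w (star w) *ᵥ x).re = ‖star w ⬝ᵥ x‖ ^ 2 := by
  rw [star_dotProduct_vecMulVec_mulVec, star_dotProduct x, Complex.star_def,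
    Complex.conj_mul', ← Complex.ofReal_pow, Complex.ofReal_re]

theorem re_star_dotProduct_sum_vecMulVec_mulVec_self {m : ℕ} (w : Fin m → ι → ℂ) (x : ι → ℂ) :
    (star x ⬝ᵥ (∑ k, vecMulVec (w k) (star (w k))) *ᵥ x).re = ∑ k, ‖star (w k) ⬝ᵥ x‖ ^ 2 := by
  simp only [sum_mulVec, dotProduct_sum, Complex.re_sum,
    re_star_dotProduct_vecMulVec_mulVec_self]

theorem PosSemidef.sqrt_re_star_dotProduct_mulVec_add_le {Q : Matrix ι ι ℂ}
    (hQ : Q.PosSemidef) (a b : ℂ) (x y : ι → ℂ) :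
    √(star (a • x + b • y) ⬝ᵥ Q *ᵥ (a • x + b • y)).re ≤
      ‖a‖ * √(star x ⬝ᵥ Q *ᵥ x).re + ‖b‖ * √(star y ⬝ᵥ Q *ᵥ y).re := by
  obtain ⟨m, w, rfl⟩ := posSemidef_iff_eq_sum_vecMulVec.mp hQ
  set W : Matrix (Fin m) ι ℂ := of fun k i => star (w k i)
  have hW (z : ι → ℂ) :
      √(star z ⬝ᵥ (∑ k, vecMulVec (w k) (star (w k))) *ᵥ z).re = ‖WithLp.toLp 2 (W *ᵥ z)‖ := by
    rw [re_star_dotProduct_sum_vecMulVec_mulVec_self, EuclideanSpace.norm_eq]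
    rfl
  rw [hW, hW, hW, mulVec_add, mulVec_smul, mulVec_smul, WithLp.toLp_add, WithLp.toLp_smul,
    WithLp.toLp_smul]
  exact (norm_add_le _ _).trans (by rw [norm_smul, norm_smul])

theorem norm_sq_star_dotProduct_add_le {u v : ι → ℂ} (hu : star u ⬝ᵥ u = 1)
    (hv : star v ⬝ᵥ v = 1) (huv : star u ⬝ᵥ v = 0) (w : ι → ℂ) :
    ‖star w ⬝ᵥ u‖ ^ 2 + ‖star w ⬝ᵥ v‖ ^ 2 ≤ (star w ⬝ᵥ w).re := by
  have hon : Orthonormal ℂ ![WithLp.toLp 2 u, WithLp.toLp 2 v] := by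
    simp only [orthonormal_iff_ite, Fin.forall_fin_two, cons_val_zero, cons_val_one,
      ← star_dotProduct_eq_inner]
    exact ⟨⟨by simpa using hu, by simpa using huv⟩,
      ⟨by simp [star_dotProduct v u, huv], by simpa using hv⟩⟩
  have hbessel := hon.sum_inner_products_le (WithLp.toLp 2 w) (s := Finset.univ)
  simp only [Fin.sum_univ_two, cons_val_zero, cons_val_one,
    ← star_dotProduct_eq_inner] at hbessel
  rwa [star_dotProduct_self_eq_norm_sq, Complex.ofReal_re, star_dotProduct w u,
    star_dotProduct w v, norm_star, norm_star]

theorem PosSemidef.re_star_dotProduct_mulVec_add_le_trace {Q : Matrix ι ι ℂ}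
    (hQ : Q.PosSemidef) {u v : ι → ℂ} (hu : star u ⬝ᵥ u = 1) (hv : star v ⬝ᵥ v = 1)
    (huv : star u ⬝ᵥ v = 0) :
    (star u ⬝ᵥ Q *ᵥ u).re + (star v ⬝ᵥ Q *ᵥ v).re ≤ Q.trace.re := by
  obtain ⟨m, w, rfl⟩ := posSemidef_iff_eq_sum_vecMulVec.mp hQ
  simp only [re_star_dotProduct_sum_vecMulVec_mulVec_self, ← Finset.sum_add_distrib,
    trace_sum, trace_vecMulVec, Complex.re_sum]
  exact Finset.sum_le_sum fun k _ => by
    rw [dotProduct_comm (w k)]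
    exact norm_sq_star_dotProduct_add_le hu hv huv (w k)

section OrthonormalPair

variable {u v : ι → ℂ}

theorem PosSemidef.re_star_dotProduct_mulVec_le {Q : Matrix ι ι ℂ} (hQ : Q.PosSemidef)
    (hu : star u ⬝ᵥ u = 1) (hv : star v ⬝ᵥ v = 1) (huv : star u ⬝ᵥ v = 0) {g : ι → ℂ}
    (hg : g = (star u ⬝ᵥ g) • u + (star v ⬝ᵥ g) • v) {m P : ℝ} (hm : 0 ≤ m)
    (htr : Q.trace.re ≤ P) (hQu : (star u ⬝ᵥ Q *ᵥ u).re = m ^ 2) :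
    (star g ⬝ᵥ Q *ᵥ g).re ≤ (m * ‖star g ⬝ᵥ u‖ + √(P - m ^ 2) * ‖star g ⬝ᵥ v‖) ^ 2 := by
  have hQv : √(star v ⬝ᵥ Q *ᵥ v).re ≤ √(P - m ^ 2) := by
    have := hQ.re_star_dotProduct_mulVec_add_le_trace hu hv huv
    exact Real.sqrt_le_sqrt (by linarith)
  have htri := hQ.sqrt_re_star_dotProduct_mulVec_add_le (star u ⬝ᵥ g) (star v ⬝ᵥ g) u v
  rw [← hg, hQu, Real.sqrt_sq hm, star_dotProduct u g, star_dotProduct v g, norm_star,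
    norm_star] at htri
  rw [← Real.sqrt_le_left (by positivity)]
  calc _ ≤ ‖star g ⬝ᵥ u‖ * m + ‖star g ⬝ᵥ v‖ * √(star v ⬝ᵥ Q *ᵥ v).re := htri
    _ ≤ _ := by rw [mul_comm m, mul_comm √(P - m ^ 2)]; gcongr

theorem exists_posSemidef_re_star_dotProduct_mulVec_eq (hu : star u ⬝ᵥ u = 1)
    (hv : star v ⬝ᵥ v = 1) (huv : star u ⬝ᵥ v = 0) (g : ι → ℂ) {m P : ℝ} (hm : 0 ≤ m)
    (hmP : m ^ 2 ≤ P) :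
    ∃ Q : Matrix ι ι ℂ, Q.PosSemidef ∧ Q.trace.re ≤ P ∧ (star u ⬝ᵥ Q *ᵥ u).re = m ^ 2 ∧
      (star g ⬝ᵥ Q *ᵥ g).re = (m * ‖star g ⬝ᵥ u‖ + √(P - m ^ 2) * ‖star g ⬝ᵥ v‖) ^ 2 := by
  obtain ⟨p, hp, hgu⟩ := Complex.exists_norm_eq_mul_self (star g ⬝ᵥ u)
  obtain ⟨q, hq, hgv⟩ := Complex.exists_norm_eq_mul_self (star g ⬝ᵥ v)
  set t := √(P - m ^ 2)
  have ht : t ^ 2 = P - m ^ 2 := Real.sq_sqrt (by linarith)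
  set w := ((m : ℂ) * p) • u + ((t : ℂ) * q) • v
  have hvu : star v ⬝ᵥ u = 0 := by rw [star_dotProduct, huv, star_zero]
  have hwu : star u ⬝ᵥ w = m * p := by
    simp [w, dotProduct_add, dotProduct_smul, hu, huv]
  have hwv : star v ⬝ᵥ w = t * q := by
    simp [w, dotProduct_add, dotProduct_smul, hv, hvu]
  have hww : (star w ⬝ᵥ w).re = m ^ 2 + t ^ 2 := by
    have : star w ⬝ᵥ w =
        star ((m : ℂ) * p) * (star u ⬝ᵥ w) + star ((t : ℂ) * q) * (star v ⬝ᵥ w) := by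
      simp only [w, star_add, star_smul, add_dotProduct, smul_dotProduct, smul_eq_mul]
    rw [this, hwu, hwv, Complex.star_def, Complex.conj_mul', Complex.conj_mul']
    simp [hp, hq, ← Complex.ofReal_pow]
  have hgw : star g ⬝ᵥ w = ((m * ‖star g ⬝ᵥ u‖ + t * ‖star g ⬝ᵥ v‖ : ℝ) : ℂ) := by
    simp only [w, dotProduct_add, dotProduct_smul, smul_eq_mul]
    push_cast
    rw [hgu, hgv]; ring
  refine ⟨vecMulVec w (star w), posSemidef_vecMulVec_self_star w, ?_, ?_, ?_⟩
  · rw [trace_vecMulVec, dotProduct_comm, hww, ht]; linarith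
  · rw [re_star_dotProduct_vecMulVec_mulVec_self, star_dotProduct, norm_star, hwu]
    simp [hp, abs_of_nonneg hm]
  · rw [re_star_dotProduct_vecMulVec_mulVec_self, star_dotProduct, norm_star, hgw,
      Complex.norm_real, Real.norm_of_nonneg (by positivity)]

theorem isGreatest_re_star_dotProduct_mulVec (hu : star u ⬝ᵥ u = 1)
    (hv : star v ⬝ᵥ v = 1) (huv : star u ⬝ᵥ v = 0) {g : ι → ℂ}
    (hg : g = (star u ⬝ᵥ g) • u + (star v ⬝ᵥ g) • v) {m P : ℝ} (hm : 0 ≤ m)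
    (hmP : m ^ 2 ≤ P) :
    IsGreatest {s | ∃ Q : Matrix ι ι ℂ, Q.PosSemidef ∧ Q.trace.re ≤ P ∧
        (star u ⬝ᵥ Q *ᵥ u).re = m ^ 2 ∧ s = (star g ⬝ᵥ Q *ᵥ g).re}
      ((m * ‖star g ⬝ᵥ u‖ + √(P - m ^ 2) * ‖star g ⬝ᵥ v‖) ^ 2) := by
  refine ⟨?_, ?_⟩
  · obtain ⟨Q, hQ, htr, hQu, hQg⟩ :=
      exists_posSemidef_re_star_dotProduct_mulVec_eq hu hv huv g hm hmP
    exact ⟨Q, hQ, htr, hQu, hQg.symm⟩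
  · rintro s ⟨Q, hQ, htr, hQu, rfl⟩
    exact hQ.re_star_dotProduct_mulVec_le hu hv huv hg hm htr hQu

theorem isLeast_logb_one_add_div_re_star_dotProduct_mulVec {a b c : ℝ} (hb : 1 < b)
    (ha : 0 ≤ a) (hc : 0 < c) (hu : star u ⬝ᵥ u = 1) (hv : star v ⬝ᵥ v = 1)
    (huv : star u ⬝ᵥ v = 0) {g : ι → ℂ} (hg : g = (star u ⬝ᵥ g) • u + (star v ⬝ᵥ g) • v)
    {m P : ℝ} (hm : 0 ≤ m) (hmP : m ^ 2 ≤ P) :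
    IsLeast {r | ∃ Q : Matrix ι ι ℂ, Q.PosSemidef ∧ Q.trace.re ≤ P ∧
        (star u ⬝ᵥ Q *ᵥ u).re = m ^ 2 ∧ r = Real.logb b (1 + a / ((star g ⬝ᵥ Q *ᵥ g).re + c))}
      (Real.logb b
        (1 + a / ((m * ‖star g ⬝ᵥ u‖ + √(P - m ^ 2) * ‖star g ⬝ᵥ v‖) ^ 2 + c))) := by
  set S := {s | ∃ Q : Matrix ι ι ℂ, Q.PosSemidef ∧ Q.trace.re ≤ P ∧
    (star u ⬝ᵥ Q *ᵥ u).re = m ^ 2 ∧ s = (star g ⬝ᵥ Q *ᵥ g).re}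
  have hS : S ⊆ Set.Ici 0 := by
    rintro s ⟨Q, hQ, -, -, rfl⟩
    exact hQ.re_dotProduct_nonneg g
  have hleast := ((antitoneOn_logb_one_add_div hb ha hc).mono hS).map_isGreatest
    (isGreatest_re_star_dotProduct_mulVec hu hv huv hg hm hmP)
  simpa [S, Set.image, eq_comm, and_assoc] using hleast

end OrthonormalPair

end Matrix

section UnitVector

variable {ι : Type*} [Fintype ι]

noncomputable def unitVector (x : ι → ℂ) : ι → ℂ := (√(star x ⬝ᵥ x).re)⁻¹ • x

theorem sqrt_re_star_dotProduct_self (x : ι → ℂ) : √(star x ⬝ᵥ x).re = ‖WithLp.toLp 2 x‖ := by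
  rw [star_dotProduct_self_eq_norm_sq, Complex.ofReal_re, Real.sqrt_sq (norm_nonneg _)]

theorem sqrt_smul_unitVector (x : ι → ℂ) : √(star x ⬝ᵥ x).re • unitVector x = x := by
  by_cases hx : x = 0
  · simp [unitVector, hx]
  · rw [unitVector, smul_smul, mul_inv_cancel₀, one_smul]
    rw [sqrt_re_star_dotProduct_self]
    simpa using hx

theorem star_unitVector_dotProduct_self {x : ι → ℂ} (hx : x ≠ 0) :
    star (unitVector x) ⬝ᵥ unitVector x = 1 := by
  have hx' : ‖WithLp.toLp 2 x‖ ≠ 0 := by simpa using hx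
  rw [unitVector, sqrt_re_star_dotProduct_self, star_smul, star_trivial, smul_dotProduct,
    dotProduct_smul, star_dotProduct_self_eq_norm_sq, smul_smul, Complex.real_smul]
  push_cast
  field_simp

theorem star_dotProduct_unitVector_eq_zero {u x : ι → ℂ} (h : star u ⬝ᵥ x = 0) :
    star u ⬝ᵥ unitVector x = 0 := by
  rw [unitVector, dotProduct_smul, h, smul_zero]

theorem re_star_dotProduct_mulVec_self_eq_mul (Q : Matrix ι ι ℂ) (x : ι → ℂ) :
    (star x ⬝ᵥ Q *ᵥ x).re =
      (star x ⬝ᵥ x).re * (star (unitVector x) ⬝ᵥ Q *ᵥ unitVector x).re := by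
  conv_lhs => rw [← sqrt_smul_unitVector x]
  rw [star_smul, star_trivial, smul_dotProduct, mulVec_smul, dotProduct_smul, smul_smul,
    Complex.smul_re, smul_eq_mul, Real.mul_self_sqrt
    (by rw [star_dotProduct_self_eq_norm_sq, Complex.ofReal_re]; positivity)]

theorem LinearIndependent.unitVector_gramSchmidt_spec {x y u v : ι → ℂ}
    (h : LinearIndependent ℂ ![x, y]) (hu : u = unitVector x)
    (hv : v = unitVector (y - (star u ⬝ᵥ y) • u)) :
    star u ⬝ᵥ u = 1 ∧ star v ⬝ᵥ v = 1 ∧ star u ⬝ᵥ v = 0 ∧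
      y = (star u ⬝ᵥ y) • u + (star v ⬝ᵥ y) • v := by
  have hx : x ≠ 0 := by simpa using h.ne_zero 0
  have hu1 : star u ⬝ᵥ u = 1 := hu ▸ star_unitVector_dotProduct_self hx
  set r := y - (star u ⬝ᵥ y) • u with hr_def
  have hyr : y = (star u ⬝ᵥ y) • u + r := by rw [hr_def, add_sub_cancel]
  have hr : r ≠ 0 := by
    intro hr0
    have hux : u = (((√(star x ⬝ᵥ x).re)⁻¹ : ℝ) : ℂ) • x := hu
    refine (LinearIndependent.pair_iff' hx).1 h ((star u ⬝ᵥ y) * (√(star x ⬝ᵥ x).re)⁻¹) ?_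
    rw [mul_smul, ← hux]
    exact (hyr.trans (by rw [hr0, add_zero])).symm
  have hur : star u ⬝ᵥ r = 0 := by
    rw [hr_def, dotProduct_sub, dotProduct_smul, hu1, smul_eq_mul, mul_one, sub_self]
  have hv1 : star v ⬝ᵥ v = 1 := hv ▸ star_unitVector_dotProduct_self hr
  have huv : star u ⬝ᵥ v = 0 := hv ▸ star_dotProduct_unitVector_eq_zero hur
  refine ⟨hu1, hv1, huv, ?_⟩
  have hvu : star v ⬝ᵥ u = 0 := by rw [star_dotProduct, huv, star_zero]
  obtain ⟨s, hrv⟩ : ∃ s : ℝ, r = (s : ℂ) • v :=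
    ⟨_, by rw [hv, Complex.coe_smul, sqrt_smul_unitVector]⟩
  have hvy : star v ⬝ᵥ y = s := by
    rw [hyr, dotProduct_add, dotProduct_smul, hvu, hrv, dotProduct_smul, hv1]
    simp
  rw [hvy, ← hrv, ← hyr]

end UnitVector

theorem stmt11_general (n : ℕ) (g₁ g₂ : Fin n → ℂ)
    (hli : LinearIndependent ℂ ![g₁, g₂])
    (a₁ a₂ c₁ c₂ Pmax : ℝ)
    (ha₁ : 0 < a₁) (ha₂ : 0 < a₂) (hc₁ : 0 < c₁) (hc₂ : 0 < c₂) (hPmax : 0 < Pmax)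
    (gh1 gperp ghperp : Fin n → ℂ)
    (hgh1 : gh1 = (Real.sqrt ((star g₁ ⬝ᵥ g₁).re))⁻¹ • g₁)
    (hgperp : gperp = g₂ - (star gh1 ⬝ᵥ g₂) • gh1)
    (hghperp : ghperp = (Real.sqrt ((star gperp ⬝ᵥ gperp).re))⁻¹ • gperp)
    (B₁ B₂ : ℝ)
    (hB₁ : B₁ = ‖star g₂ ⬝ᵥ gh1‖)
    (hB₂ : B₂ = ‖star g₂ ⬝ᵥ ghperp‖)
    (R₁ : ℝ)
    (hR₁l : Real.logb 2 (1 + a₁ / (Pmax * (star g₁ ⬝ᵥ g₁).re + c₁)) ≤ R₁)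
    (hR₁u : R₁ ≤ Real.logb 2 (1 + a₁ / c₁))
    (φ : ℝ) (hφ : φ = a₁ / ((2 : ℝ) ^ R₁ - 1) - c₁)
    (m : ℝ) (hm : m = Real.sqrt φ / Real.sqrt ((star g₁ ⬝ᵥ g₁).re)) :
    IsLeast
      {r : ℝ | ∃ Q : Matrix (Fin n) (Fin n) ℂ, Q.PosSemidef ∧ Q.trace.re ≤ Pmax ∧
        Real.logb 2 (1 + a₁ / ((star g₁ ⬝ᵥ Q.mulVec g₁).re + c₁)) = R₁ ∧
        r = Real.logb 2 (1 + a₂ / ((star g₂ ⬝ᵥ Q.mulVec g₂).re + c₂))}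
      (Real.logb 2 (1 + a₂ /
        ((m * B₁ + Real.sqrt (Pmax - m ^ 2) * B₂) ^ 2 + c₂))) := by
  have hgh1' : unitVector g₁ = gh1 := hgh1.symm
  obtain ⟨hu, hv, huv, hg₂⟩ := hli.unitVector_gramSchmidt_spec hgh1 (hgperp ▸ hghperp)
  set N := (star g₁ ⬝ᵥ g₁).re
  have hN : 0 < N := by
    have hg₁ : g₁ ≠ 0 := by simpa using hli.ne_zero 0
    simpa using (Complex.lt_def.mp (dotProduct_star_self_pos_iff.mpr hg₁)).1
  have hR₁ : 0 < R₁ := (logb_one_add_div_pos one_lt_two ha₁ (by positivity)).trans_le hR₁l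
  have hφ₀ : 0 ≤ φ := by linarith [(le_logb_one_add_div_iff one_lt_two ha₁ hc₁ hR₁).1 hR₁u]
  have hφP : φ ≤ Pmax * N := by
    linarith [(logb_one_add_div_le_iff one_lt_two ha₁ (by positivity) hR₁).1 hR₁l]
  have hNm : N * m ^ 2 = φ := by
    rw [hm, div_pow, Real.sq_sqrt hφ₀, Real.sq_sqrt hN.le]
    field_simp
  have hmP : m ^ 2 ≤ Pmax := le_of_mul_le_mul_left (by linarith) hN
  have hrate₁ (Q : Matrix (Fin n) (Fin n) ℂ) (hQ : Q.PosSemidef) :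
      Real.logb 2 (1 + a₁ / ((star g₁ ⬝ᵥ Q *ᵥ g₁).re + c₁)) = R₁ ↔
        (star gh1 ⬝ᵥ Q *ᵥ gh1).re = m ^ 2 := by
    rw [logb_one_add_div_eq_iff (x := (star g₁ ⬝ᵥ Q *ᵥ g₁).re + c₁) one_lt_two ha₁
        (add_pos_of_nonneg_of_pos (hQ.re_dotProduct_nonneg g₁) hc₁) hR₁,
      re_star_dotProduct_mulVec_self_eq_mul, hgh1', sub_eq_iff_eq_add.mp hφ.symm, ← hNm,
      add_left_inj, mul_right_inj' hN.ne']
  rw [hB₁, hB₂]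
  convert isLeast_logb_one_add_div_re_star_dotProduct_mulVec one_lt_two ha₂.le hc₂ hu hv huv hg₂
    (by rw [hm]; positivity) hmP using 2
  ext r
  exact exists_congr fun Q =>
    and_congr_right fun hQ => and_congr_right' (and_congr_left' (hrate₁ Q hQ))

/-- Consequence of Theorem 3 of the paper: closed form of the lower boundary f_min of
the achievable rate region for the two suspicious links. -/
theorem stmt11 (n : ℕ) (hn : 1 ≤ n) (g₁ g₂ : Fin n → ℂ)
    (hli : LinearIndependent ℂ ![g₁, g₂])
    (a₁ a₂ c₁ c₂ Pmax : ℝ)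
    (ha₁ : 0 < a₁) (ha₂ : 0 < a₂) (hc₁ : 0 < c₁) (hc₂ : 0 < c₂) (hPmax : 0 < Pmax)
    (gh1 gperp ghperp : Fin n → ℂ)
    (hgh1 : gh1 = (Real.sqrt ((star g₁ ⬝ᵥ g₁).re))⁻¹ • g₁)
    (hgperp : gperp = g₂ - (star gh1 ⬝ᵥ g₂) • gh1)
    (hghperp : ghperp = (Real.sqrt ((star gperp ⬝ᵥ gperp).re))⁻¹ • gperp)
    (B₁ B₂ : ℝ)
    (hB₁ : B₁ = ‖star g₂ ⬝ᵥ gh1‖)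
    (hB₂ : B₂ = ‖star g₂ ⬝ᵥ ghperp‖)
    (R₁ : ℝ)
    (hR₁l : Real.logb 2 (1 + a₁ / (Pmax * (star g₁ ⬝ᵥ g₁).re + c₁)) ≤ R₁)
    (hR₁u : R₁ ≤ Real.logb 2 (1 + a₁ / c₁))
    (φ : ℝ) (hφ : φ = a₁ / ((2 : ℝ) ^ R₁ - 1) - c₁)
    (m : ℝ) (hm : m = Real.sqrt φ / Real.sqrt ((star g₁ ⬝ᵥ g₁).re)) :
    IsLeast
      {r : ℝ | ∃ Q : Matrix (Fin n) (Fin n) ℂ, Q.PosSemidef ∧ Q.trace.re ≤ Pmax ∧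
        Real.logb 2 (1 + a₁ / ((star g₁ ⬝ᵥ Q.mulVec g₁).re + c₁)) = R₁ ∧
        r = Real.logb 2 (1 + a₂ / ((star g₂ ⬝ᵥ Q.mulVec g₂).re + c₂))}
      (Real.logb 2 (1 + a₂ /
        ((m * B₁ + Real.sqrt (Pmax - m ^ 2) * B₂) ^ 2 + c₂))) :=
  stmt11_general n g₁ g₂ hli a₁ a₂ c₁ c₂ Pmax ha₁ ha₂ hc₁ hc₂ hPmax gh1 gperp ghperp hgh1 hgperp
    hghperp B₁ B₂ hB₁ hB₂ R₁ hR₁l hR₁u φ hφ m hm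
end

section
/- Let n ≥ 1, let g₁, g₂ ∈ ℂⁿ be linearly independent, and let P > 0. Define ĝ₁ = g₁/‖g₁‖, g₁⊥ = g₂ − (ĝ₁ᴴg₂)ĝ₁, ĝ₁⊥ = g₁⊥/‖g₁⊥‖, B₁ = |g₂ᴴĝ₁| and B₂ = |g₂ᴴĝ₁⊥|. Let φ₁, φ₂ ≥ 0 be real numbers with φ₁ ≤ P·‖g₁‖², set m = √(φ₁)/‖g₁‖, and assume |m·B₁ − √(φ₂)| ≤ √(P − m²)·B₂. Then the vector w = ε₁·ĝ₁ + ε₂·ĝ₁⊥ with ε₁ = m·e^{−i·arg(g₂ᴴĝ₁)} and ε₂ = ((√(φ₂) − m·B₁)/B₂)·e^{−i·arg(g₂ᴴĝ₁⊥)} satisfies ‖w‖² ≤ P, |g₁ᴴw|² = φ₁ and |g₂ᴴw|² = φ₂; in particular there exists a jamming beamformer within the power budget delivering exactly jamming power φ₁ at receiver 1 and φ₂ at receiver 2. (This is Proposition 3 of the paper: every rate pair lying between the lower and upper boundary curves of the achievable rate region for the suspicious links is achievable with a single jamming beamforming vector of power at most P.) -/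
/-!
Gram–Schmidt applied to `g₁, g₂` gives an orthonormal pair `ĝ₁, ĝ₁⊥` with `g₁ ⟂ ĝ₁⊥` and
`B₂ = ‖g₁⊥‖ > 0`, so the jamming power at receiver 1 only sees the `ĝ₁`-coordinate `ε₁` of `w`,
while `‖w‖² = |ε₁|² + |ε₂|²`. The phases of `ε₁, ε₂` are chosen to cancel those of `g₂ᴴĝ₁` and
`g₂ᴴĝ₁⊥`, which makes `g₂ᴴw` the real number `m B₁ + ((√φ₂ - m B₁) / B₂) B₂ = √φ₂`. The band
condition is exactly the statement that the remaining budget `P - m²` covers `|ε₂|²`.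
-/

open scoped InnerProductSpace
open Complex

lemma Complex.exp_neg_arg_mul_I_mul_self (z : ℂ) : exp (-(arg z : ℂ) * I) * z = ‖z‖ := by
  calc exp (-(arg z : ℂ) * I) * z = exp (-(arg z : ℂ) * I) * (‖z‖ * exp (arg z * I)) := by
        rw [norm_mul_exp_arg_mul_I]
    _ = ‖z‖ := by rw [mul_left_comm, ← exp_add, neg_mul, neg_add_cancel, exp_zero, mul_one]

lemma Complex.norm_ofReal_mul_exp_neg_ofReal_mul_I (α a : ℝ) :
    ‖(α : ℂ) * exp (-(a : ℂ) * I)‖ = |α| := by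
  rw [norm_mul, ← ofReal_neg, norm_exp_ofReal_mul_I, mul_one, norm_real, Real.norm_eq_abs]

section GramSchmidt

variable {𝕜 E : Type*} [RCLike 𝕜] [NormedAddCommGroup E] [InnerProductSpace 𝕜 E]

lemma inner_sub_inner_smul_of_norm_eq_one {u : E} (hu : ‖u‖ = 1) (v : E) :
    ⟪u, v - ⟪u, v⟫_𝕜 • u⟫_𝕜 = 0 := by
  rw [inner_sub_right, inner_smul_right, inner_self_eq_norm_sq_to_K, hu]
  simp

lemma inner_inv_norm_smul_self (x : E) : ⟪x, (‖x‖⁻¹ : 𝕜) • x⟫_𝕜 = ‖x‖ := by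
  rcases eq_or_ne x 0 with rfl | hx
  · simp
  have : (‖x‖ : 𝕜) ≠ 0 := by simpa using hx
  rw [inner_smul_right, inner_self_eq_norm_sq_to_K]
  field_simp

lemma inner_inv_norm_smul_sub_inner_smul_of_norm_eq_one {u : E} (hu : ‖u‖ = 1) (y : E) :
    ⟪y, (‖y - ⟪u, y⟫_𝕜 • u‖⁻¹ : 𝕜) • (y - ⟪u, y⟫_𝕜 • u)⟫_𝕜 = ‖y - ⟪u, y⟫_𝕜 • u‖ := by
  nth_rewrite 1 [← sub_add_cancel y (⟪u, y⟫_𝕜 • u)]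
  rw [inner_add_left, inner_inv_norm_smul_self, inner_smul_left, inner_smul_right,
    inner_sub_inner_smul_of_norm_eq_one hu, mul_zero, mul_zero, add_zero]

lemma LinearIndependent.sub_smul_ne_zero {x y : E} (h : LinearIndependent 𝕜 ![x, y]) (c : 𝕜) :
    y - c • x ≠ 0 := by
  intro hyx
  exact one_ne_zero (LinearIndependent.pair_iff.mp h (-c) 1 (by rw [← hyx]; module)).2

end GramSchmidt

section PhaseAlignedBeamformer

variable {E : Type*} [NormedAddCommGroup E] [InnerProductSpace ℂ E]

lemma inner_phase_aligned_smul (y u : E) (α : ℝ) :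
    ⟪y, ((α : ℂ) * exp (-(arg ⟪y, u⟫_ℂ : ℂ) * I)) • u⟫_ℂ = α * ‖⟪y, u⟫_ℂ‖ := by
  rw [inner_smul_right, mul_assoc, exp_neg_arg_mul_I_mul_self]

lemma norm_sq_smul_add_smul_of_orthonormal {u v : E} (hu : ‖u‖ = 1) (hv : ‖v‖ = 1)
    (huv : ⟪u, v⟫_ℂ = 0) (a b : ℂ) : ‖a • u + b • v‖ ^ 2 = ‖a‖ ^ 2 + ‖b‖ ^ 2 := by
  have h := norm_add_sq_eq_norm_sq_add_norm_sq_of_inner_eq_zero (a • u) (b • v)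
    (by rw [inner_smul_left, inner_smul_right, huv, mul_zero, mul_zero])
  simpa [sq, norm_smul, hu, hv] using h

end PhaseAlignedBeamformer

lemma sq_sqrt_div_le_of_le_mul_sq {φ P g : ℝ} (hφ : 0 ≤ φ) (hg : 0 < g) (h : φ ≤ P * g ^ 2) :
    (Real.sqrt φ / g) ^ 2 ≤ P := by
  rwa [div_pow, Real.sq_sqrt hφ, div_le_iff₀ (by positivity)]

lemma sq_add_div_sq_le_of_abs_le {P m d B : ℝ} (hB : 0 < B) (hm : m ^ 2 ≤ P)
    (h : |d| ≤ Real.sqrt (P - m ^ 2) * B) : m ^ 2 + (d / B) ^ 2 ≤ P := by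
  rw [div_pow, ← le_sub_iff_add_le', div_le_iff₀ (by positivity)]
  calc d ^ 2 = |d| ^ 2 := (sq_abs d).symm
    _ ≤ (Real.sqrt (P - m ^ 2) * B) ^ 2 := pow_le_pow_left₀ (abs_nonneg d) h 2
    _ = (P - m ^ 2) * B ^ 2 := by rw [mul_pow, Real.sq_sqrt (sub_nonneg.mpr hm)]

theorem stmt14_general (n : ℕ) (g₁ g₂ : EuclideanSpace ℂ (Fin n))
    (hli : LinearIndependent ℂ ![g₁, g₂]) (P : ℝ)
    (gh1 gperp ghperp : EuclideanSpace ℂ (Fin n))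
    (hgh1 : gh1 = (‖g₁‖⁻¹ : ℝ) • g₁)
    (hgperp : gperp = g₂ - ⟪gh1, g₂⟫_ℂ • gh1)
    (hghperp : ghperp = (‖gperp‖⁻¹ : ℝ) • gperp)
    (B₁ B₂ : ℝ)
    (hB₁ : B₁ = ‖⟪g₂, gh1⟫_ℂ‖)
    (hB₂ : B₂ = ‖⟪g₂, ghperp⟫_ℂ‖)
    (φ₁ φ₂ : ℝ) (hφ₁0 : 0 ≤ φ₁) (hφ₂0 : 0 ≤ φ₂) (hφ₁P : φ₁ ≤ P * ‖g₁‖ ^ 2)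
    (m : ℝ) (hm : m = Real.sqrt φ₁ / ‖g₁‖)
    (hband : |m * B₁ - Real.sqrt φ₂| ≤ Real.sqrt (P - m ^ 2) * B₂) :
    let ε₁ : ℂ := (m : ℂ) * Complex.exp (-(Complex.arg ⟪g₂, gh1⟫_ℂ : ℂ) * Complex.I)
    let ε₂ : ℂ := (((Real.sqrt φ₂ - m * B₁) / B₂ : ℝ) : ℂ) *
      Complex.exp (-(Complex.arg ⟪g₂, ghperp⟫_ℂ : ℂ) * Complex.I)
    let w : EuclideanSpace ℂ (Fin n) := ε₁ • gh1 + ε₂ • ghperp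
    ‖w‖ ^ 2 ≤ P ∧
    ‖⟪g₁, w⟫_ℂ‖ ^ 2 = φ₁ ∧
    ‖⟪g₂, w⟫_ℂ‖ ^ 2 = φ₂ := by
  intro ε₁ ε₂ w
  rw [← Complex.coe_smul, ofReal_inv] at hgh1 hghperp
  have hg₁ : g₁ ≠ 0 := hli.ne_zero 0
  have hgperp_ne : gperp ≠ 0 := by
    rw [hgperp, hgh1, smul_smul]
    exact hli.sub_smul_ne_zero _
  have hu : ‖gh1‖ = 1 := hgh1 ▸ norm_smul_inv_norm hg₁
  have hv : ‖ghperp‖ = 1 := hghperp ▸ norm_smul_inv_norm hgperp_ne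
  have huv : ⟪gh1, ghperp⟫_ℂ = 0 := by
    rw [hghperp, inner_smul_right, hgperp, inner_sub_inner_smul_of_norm_eq_one hu, mul_zero]
  have hg₁v : ⟪g₁, ghperp⟫_ℂ = 0 := by
    have hn : (‖g₁‖ : ℂ)⁻¹ ≠ 0 := by simpa using hg₁
    simpa [hgh1, inner_smul_left, hn] using huv
  have hg₂v : ⟪g₂, ghperp⟫_ℂ = ‖gperp‖ := by
    rw [hghperp, hgperp]
    exact inner_inv_norm_smul_sub_inner_smul_of_norm_eq_one hu g₂
  have hB₂_pos : 0 < B₂ := by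
    rw [hB₂, hg₂v, norm_real, norm_norm]
    exact norm_pos_iff.mpr hgperp_ne
  have hg₁u : ⟪g₁, gh1⟫_ℂ = ‖g₁‖ := hgh1 ▸ inner_inv_norm_smul_self g₁
  have hg₁_pos : 0 < ‖g₁‖ := norm_pos_iff.mpr hg₁
  have hm_nonneg : 0 ≤ m := hm ▸ by positivity
  have hm_sq : m ^ 2 ≤ P := hm ▸ sq_sqrt_div_le_of_le_mul_sq hφ₁0 hg₁_pos hφ₁P
  refine ⟨?_, ?_, ?_⟩
  · rw [norm_sq_smul_add_smul_of_orthonormal hu hv huv, norm_ofReal_mul_exp_neg_ofReal_mul_I,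
      norm_ofReal_mul_exp_neg_ofReal_mul_I, sq_abs, sq_abs]
    exact sq_add_div_sq_le_of_abs_le hB₂_pos hm_sq (abs_sub_comm (m * B₁) _ ▸ hband)
  · rw [inner_add_right, inner_smul_right, inner_smul_right, hg₁v, hg₁u,
      mul_zero, add_zero, norm_mul, norm_ofReal_mul_exp_neg_ofReal_mul_I, norm_real,
      Real.norm_eq_abs, abs_of_nonneg hm_nonneg, abs_of_pos hg₁_pos, hm,
      div_mul_cancel₀ _ hg₁_pos.ne', Real.sq_sqrt hφ₁0]
  · have hinner : ⟪g₂, w⟫_ℂ = Real.sqrt φ₂ := by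
      rw [inner_add_right, inner_phase_aligned_smul, inner_phase_aligned_smul, ← hB₁, ← hB₂,
        ← ofReal_mul, ← ofReal_mul, div_mul_cancel₀ _ hB₂_pos.ne', ← ofReal_add, add_sub_cancel]
    rw [hinner, norm_real, Real.norm_of_nonneg (Real.sqrt_nonneg _), Real.sq_sqrt hφ₂0]

/-- Proposition 3 of the paper: any rate pair between the lower and upper boundary curves
is achievable by a single jamming beamformer within the power budget, delivering exactly
jamming power φ₁ at receiver 1 and φ₂ at receiver 2. -/
theorem stmt14 (n : ℕ) (hn : 1 ≤ n) (g₁ g₂ : EuclideanSpace ℂ (Fin n))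
    (hli : LinearIndependent ℂ ![g₁, g₂]) (P : ℝ) (hP : 0 < P)
    (gh1 gperp ghperp : EuclideanSpace ℂ (Fin n))
    (hgh1 : gh1 = (‖g₁‖⁻¹ : ℝ) • g₁)
    (hgperp : gperp = g₂ - ⟪gh1, g₂⟫_ℂ • gh1)
    (hghperp : ghperp = (‖gperp‖⁻¹ : ℝ) • gperp)
    (B₁ B₂ : ℝ)
    (hB₁ : B₁ = ‖⟪g₂, gh1⟫_ℂ‖)
    (hB₂ : B₂ = ‖⟪g₂, ghperp⟫_ℂ‖)
    (φ₁ φ₂ : ℝ) (hφ₁0 : 0 ≤ φ₁) (hφ₂0 : 0 ≤ φ₂) (hφ₁P : φ₁ ≤ P * ‖g₁‖ ^ 2)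
    (m : ℝ) (hm : m = Real.sqrt φ₁ / ‖g₁‖)
    (hband : |m * B₁ - Real.sqrt φ₂| ≤ Real.sqrt (P - m ^ 2) * B₂) :
    let ε₁ : ℂ := (m : ℂ) * Complex.exp (-(Complex.arg ⟪g₂, gh1⟫_ℂ : ℂ) * Complex.I)
    let ε₂ : ℂ := (((Real.sqrt φ₂ - m * B₁) / B₂ : ℝ) : ℂ) *
      Complex.exp (-(Complex.arg ⟪g₂, ghperp⟫_ℂ : ℂ) * Complex.I)
    let w : EuclideanSpace ℂ (Fin n) := ε₁ • gh1 + ε₂ • ghperp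
    ‖w‖ ^ 2 ≤ P ∧
    ‖⟪g₁, w⟫_ℂ‖ ^ 2 = φ₁ ∧
    ‖⟪g₂, w⟫_ℂ‖ ^ 2 = φ₂ :=
  stmt14_general n g₁ g₂ hli P gh1 gperp ghperp hgh1 hgperp hghperp B₁ B₂ hB₁ hB₂ φ₁ φ₂ hφ₁0 hφ₂0
    hφ₁P m hm hband
end

section
/- Let N ≥ 1, let h₁, h₂ ∈ ℂᴺ, and let P₁ > 0 and σ² > 0. Then the matrix M = P₁·h₁h₁ᴴ + σ²·I is Hermitian positive definite (hence invertible), and the real number h₂ᴴM⁻¹h₂ satisfies h₂ᴴM⁻¹h₂ ≤ ‖h₂‖²/σ², with equality if and only if ⟨h₁, h₂⟩ = 0. Consequently, for any P₂ > 0, log₂(1 + P₂·h₂ᴴM⁻¹h₂) ≤ log₂(1 + P₂·‖h₂‖²/σ²). (This is the paper's claim R²_{[2,1]} ≤ R²_{[1,2]} in Section IV: decoding and cancelling link 1's signal first strictly increases the achievable rate of eavesdropping link 2 whenever the two eavesdropping channels are not orthogonal, so the MMSE-SIC achievable region contains the MMSE achievable region.) -/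
open Matrix
open scoped ComplexOrder

/-!
`M = σ²I + P₁h₁h₁ᴴ` is a rank-one perturbation of a scalar matrix, so the Sherman–Morrison formula
gives `h₂ᴴM⁻¹h₂ = (‖h₂‖² - P₁|⟨h₁, h₂⟩|² / (σ² + P₁‖h₁‖²)) / σ²` in closed form. The subtracted
term is nonnegative and vanishes exactly when `⟨h₁, h₂⟩ = 0`; the rate comparison then follows
from monotonicity of `log₂`, since `h₂ᴴM⁻¹h₂ ≥ 0` by positive definiteness of `M⁻¹`.
-/

namespace Matrix

variable {n K : Type*} [Fintype n] [DecidableEq n] [Field K]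

/-- Sherman–Morrison formula for a rank-one perturbation of a scalar matrix. -/
theorem inv_smul_vecMulVec_add_smul_one (a s : K) (u v : n → K) (hs : s ≠ 0)
    (hden : s + a * (v ⬝ᵥ u) ≠ 0) :
    (a • vecMulVec u v + s • 1)⁻¹ = s⁻¹ • (1 - (a / (s + a * (v ⬝ᵥ u))) • vecMulVec u v) := by
  refine inv_eq_right_inv ?_
  have hsq : vecMulVec u v * vecMulVec u v = (v ⬝ᵥ u) • vecMulVec u v := by
    rw [vecMulVec_mul_vecMulVec, vecMulVec_smul]
  simp only [Matrix.mul_smul, Matrix.mul_sub, Matrix.add_mul, Matrix.smul_mul, hsq,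
    Matrix.one_mul, Matrix.mul_one, smul_smul]
  match_scalars <;> field_simp; ring

theorem dotProduct_inv_smul_vecMulVec_add_smul_one_mulVec (a s : K) (u v w x : n → K)
    (hs : s ≠ 0) (hden : s + a * (v ⬝ᵥ u) ≠ 0) :
    w ⬝ᵥ (a • vecMulVec u v + s • 1)⁻¹ *ᵥ x =
      s⁻¹ * (w ⬝ᵥ x - a / (s + a * (v ⬝ᵥ u)) * (w ⬝ᵥ u) * (v ⬝ᵥ x)) := by
  rw [inv_smul_vecMulVec_add_smul_one a s u v hs hden]
  simp only [smul_mulVec, sub_mulVec, one_mulVec, vecMulVec_mulVec, dotProduct_smul,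
    dotProduct_sub, smul_eq_mul, MulOpposite.smul_eq_mul_unop, MulOpposite.unop_op]
  ring

theorem posDef_smul_vecMulVec_add_smul_one {P σ : ℝ} (hP : 0 ≤ P) (hσ : 0 < σ) (x : n → ℂ) :
    ((P : ℂ) • vecMulVec x (star x) + (σ : ℂ) • 1).PosDef :=
  PosDef.posSemidef_add ((posSemidef_vecMulVec_self_star x).smul (by exact_mod_cast hP))
    (PosDef.one.smul (by exact_mod_cast hσ))

theorem re_star_dotProduct_inv_smul_vecMulVec_add_smul_one_mulVec {P σ : ℝ} (hP : 0 ≤ P)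
    (hσ : 0 < σ) (x y : n → ℂ) :
    (star y ⬝ᵥ ((P : ℂ) • vecMulVec x (star x) + (σ : ℂ) • 1)⁻¹ *ᵥ y).re =
      ((star y ⬝ᵥ y).re - P / (σ + P * (star x ⬝ᵥ x).re) * Complex.normSq (star x ⬝ᵥ y)) / σ := by
  have hx : star x ⬝ᵥ x = (star x ⬝ᵥ x).re :=
    Complex.eq_re_of_ofReal_le (r := 0) (by exact_mod_cast dotProduct_star_self_nonneg x)
  have hy : star y ⬝ᵥ y = (star y ⬝ᵥ y).re :=
    Complex.eq_re_of_ofReal_le (r := 0) (by exact_mod_cast dotProduct_star_self_nonneg y)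
  have hxre : 0 ≤ (star x ⬝ᵥ x).re := (Complex.nonneg_iff.mp (dotProduct_star_self_nonneg x)).1
  have hden : σ + P * (star x ⬝ᵥ x).re ≠ 0 := by positivity
  rw [dotProduct_inv_smul_vecMulVec_add_smul_one_mulVec _ _ _ _ _ _ (by exact_mod_cast hσ.ne')
    (by rw [hx]; exact_mod_cast hden), star_dotProduct (v := y) (w := x), Complex.star_def,
    mul_assoc, ← Complex.normSq_eq_conj_mul_self, hx, hy]
  norm_cast
  exact inv_mul_eq_div _ _

end Matrix

theorem stmt15_general (N : ℕ) (h₁ h₂ : Fin N → ℂ)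
    (P₁ P₂ σ2 : ℝ) (hP₁ : 0 < P₁) (hP₂ : 0 < P₂) (hσ : 0 < σ2) :
    let M : Matrix (Fin N) (Fin N) ℂ :=
      (P₁ : ℂ) • Matrix.vecMulVec h₁ (star h₁) + (σ2 : ℂ) • (1 : Matrix (Fin N) (Fin N) ℂ)
    M.PosDef ∧ IsUnit M ∧
    (star h₂ ⬝ᵥ M⁻¹.mulVec h₂).re ≤ (star h₂ ⬝ᵥ h₂).re / σ2 ∧
    ((star h₂ ⬝ᵥ M⁻¹.mulVec h₂).re = (star h₂ ⬝ᵥ h₂).re / σ2 ↔ star h₁ ⬝ᵥ h₂ = 0) ∧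
    Real.logb 2 (1 + P₂ * (star h₂ ⬝ᵥ M⁻¹.mulVec h₂).re) ≤
      Real.logb 2 (1 + P₂ * ((star h₂ ⬝ᵥ h₂).re / σ2)) := by
  intro M
  have hM : M.PosDef := posDef_smul_vecMulVec_add_smul_one hP₁.le hσ h₁
  have hform := re_star_dotProduct_inv_smul_vecMulVec_add_smul_one_mulVec hP₁.le hσ h₁ h₂
  have hgain_pos : 0 < P₁ / (σ2 + P₁ * (star h₁ ⬝ᵥ h₁).re) := by
    have := (Complex.nonneg_iff.mp (dotProduct_star_self_nonneg h₁)).1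
    positivity
  have hle : (star h₂ ⬝ᵥ M⁻¹ *ᵥ h₂).re ≤ (star h₂ ⬝ᵥ h₂).re / σ2 := by
    rw [hform]
    gcongr
    exact sub_le_self _ (mul_nonneg hgain_pos.le (Complex.normSq_nonneg _))
  have hnonneg : 0 ≤ (star h₂ ⬝ᵥ M⁻¹ *ᵥ h₂).re :=
    (Complex.nonneg_iff.mp (hM.inv.posSemidef.dotProduct_mulVec_nonneg h₂)).1
  refine ⟨hM, hM.isUnit, hle, ?_, ?_⟩
  · rw [hform, div_left_inj' hσ.ne', sub_eq_self, mul_eq_zero, Complex.normSq_eq_zero]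
    simp [hgain_pos.ne']
  · exact Real.logb_le_logb_of_le one_lt_two (by positivity) (by gcongr)

/-- Section IV claim of the paper (R²_{[2,1]} ≤ R²_{[1,2]}): M = P₁h₁h₁ᴴ + σ²I is
Hermitian positive definite, h₂ᴴM⁻¹h₂ ≤ ‖h₂‖²/σ² with equality iff ⟨h₁, h₂⟩ = 0, and
hence the MMSE rate of link 2 is at most its MMSE-SIC rate. -/
theorem stmt15 (N : ℕ) (hN : 1 ≤ N) (h₁ h₂ : Fin N → ℂ)
    (P₁ P₂ σ2 : ℝ) (hP₁ : 0 < P₁) (hP₂ : 0 < P₂) (hσ : 0 < σ2) :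
    let M : Matrix (Fin N) (Fin N) ℂ :=
      (P₁ : ℂ) • Matrix.vecMulVec h₁ (star h₁) + (σ2 : ℂ) • (1 : Matrix (Fin N) (Fin N) ℂ)
    M.PosDef ∧ IsUnit M ∧
    (star h₂ ⬝ᵥ M⁻¹.mulVec h₂).re ≤ (star h₂ ⬝ᵥ h₂).re / σ2 ∧
    ((star h₂ ⬝ᵥ M⁻¹.mulVec h₂).re = (star h₂ ⬝ᵥ h₂).re / σ2 ↔ star h₁ ⬝ᵥ h₂ = 0) ∧
    Real.logb 2 (1 + P₂ * (star h₂ ⬝ᵥ M⁻¹.mulVec h₂).re) ≤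
      Real.logb 2 (1 + P₂ * ((star h₂ ⬝ᵥ h₂).re / σ2)) :=
  stmt15_general N h₁ h₂ P₁ P₂ σ2 hP₁ hP₂ hσ
end
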